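/- arXiv:2506.02241 — 10 statements merged into one kernel-verified Lean document; each statement's English description precedes it below -/
import Mathlib

section
/- Let f = n/d be an irreducible strictly proper rational function over ℂ of degree k ≥ 1, and let λ_1,…,λ_k ∈ ℂ be pairwise distinct points with d(λ_j) ≠ 0 for all j. Set h_j = n(λ_j)/d(λ_j). Then there exist weights w_1,…,w_k ∈ ℂ such that f coincides with the unstructured barycentric form determined by λ_j, h_j, w_j; equivalently, n(s)·D(s) = d(s)·N(s) as polynomials, where N and D are the cleared numerator and denominator of that barycentric form. -/
open Polynomial Finset Lagrange

/-!
Up to the nodal weights, the polynomials `∏_{l ≠ j} (X - λ_l)` are the Lagrange basis of the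
polynomials of degree `< k`. The barycentric denominator `D` is `∏_j (X - λ_j)` plus a combination
of them, so the weights can be chosen to make `D` the monic normalisation `d * C c` of `d`, where
`c = (lead d)⁻¹`. Then `N` has degree `< k` and agrees with `n * C c` at every `λ_j`, hence
`N = n * C c` and `n D = d N`.
-/

namespace Lagrange

variable {F ι : Type*} [Field F] [DecidableEq ι] {s : Finset ι} {v : ι → F}

theorem basis_eq_C_nodalWeight_mul_nodal_erase {i : ι} (hi : i ∈ s) :
    Lagrange.basis s v i = C (nodalWeight s v i) * nodal (s.erase i) v := by
  rw [basis_eq_prod_sub_inv_mul_nodal_div hi, nodal_erase_eq_nodal_div hi]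

theorem eq_sum_C_mul_nodal_erase_of_eval_eq {f : F[X]} (r : ι → F) (hvs : Set.InjOn v s)
    (hf : f.degree < #s) (eval_f : ∀ i ∈ s, f.eval (v i) = r i) :
    f = ∑ i ∈ s, C (r i * nodalWeight s v i) * nodal (s.erase i) v := by
  rw [eq_interpolate_of_eval_eq r hvs hf eval_f, interpolate_apply]
  refine sum_congr rfl fun i hi => ?_
  rw [basis_eq_C_nodalWeight_mul_nodal_erase hi, C_mul, mul_assoc]

end Lagrange

theorem stmt_0_general (k : ℕ) (n d : Polynomial ℂ)
    (hprop : n.degree < d.degree) (hdeg : d.natDegree = k)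
    (lam : Fin k → ℂ) (hlam : Function.Injective lam)
    (hpole : ∀ j, d.eval (lam j) ≠ 0)
    (h : Fin k → ℂ) (hh : ∀ j, h j = n.eval (lam j) / d.eval (lam j)) :
    ∃ w : Fin k → ℂ,
      n * ((∏ j, (X - C (lam j))) +
            ∑ j, C (w j) * ∏ l ∈ Finset.univ.erase j, (X - C (lam l)))
        = d * (∑ j, C (h j * w j) * ∏ l ∈ Finset.univ.erase j, (X - C (lam l))) := by
  have hd : d ≠ 0 := ne_zero_of_degree_gt hprop
  set c := d.leadingCoeff⁻¹
  have hc : c ≠ 0 := inv_ne_zero (leadingCoeff_ne_zero.mpr hd)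
  have hd_deg : d.degree = #(univ : Finset (Fin k)) := by
    rw [degree_eq_natDegree hd, hdeg, card_univ, Fintype.card_fin]
  set w : Fin k → ℂ := fun j => (d * C c).eval (lam j) * nodalWeight univ lam j
  have hdenom : d * C c - nodal univ lam
      = ∑ j, C (w j) * nodal (univ.erase j) lam := by
    refine eq_sum_C_mul_nodal_erase_of_eval_eq _ hlam.injOn ?_ fun j hj => ?_
    · rw [← degree_nodal (v := lam)]
      refine degree_sub_lt_right ?_ nodal_ne_zero ?_
      · rw [degree_mul_C hc, hd_deg, degree_nodal]
      · rw [(monic_mul_leadingCoeff_inv hd).leadingCoeff, nodal_monic.leadingCoeff]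
    · rw [eval_sub, eval_nodal_at_node hj, sub_zero]
  have hvalues : ∀ j, h j * w j = (n * C c).eval (lam j) * nodalWeight univ lam j := by
    intro j
    simp only [w, hh, eval_mul, eval_C]
    field_simp [hpole j]
  have hnum : n * C c = ∑ j, C (h j * w j) * nodal (univ.erase j) lam := by
    simp_rw [hvalues]
    refine eq_sum_C_mul_nodal_erase_of_eval_eq _ hlam.injOn ?_ fun _ _ => rfl
    rwa [degree_mul_C hc, ← hd_deg]
  refine ⟨w, ?_⟩
  simp only [← nodal_eq]
  rw [← hdenom, ← hnum]
  ring

/-- Any irreducible strictly proper rational function `f = n/d` of degree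
`k ≥ 1` can be represented by the unstructured barycentric form with arbitrary
distinct support points `λ_j` (not poles of `f`) and values `h_j = f(λ_j)`:
there exist weights `w_j` with `n · D = d · N` for the cleared numerator `N` and
denominator `D` of the barycentric form. -/
theorem stmt_0 (k : ℕ) (hk : 1 ≤ k) (n d : Polynomial ℂ) (hd : d ≠ 0)
    (hprop : n.degree < d.degree) (hirr : IsCoprime n d) (hdeg : d.natDegree = k)
    (lam : Fin k → ℂ) (hlam : Function.Injective lam)
    (hpole : ∀ j, d.eval (lam j) ≠ 0)
    (h : Fin k → ℂ) (hh : ∀ j, h j = n.eval (lam j) / d.eval (lam j)) :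
    ∃ w : Fin k → ℂ,
      n * ((∏ j, (X - C (lam j))) +
            ∑ j, C (w j) * ∏ l ∈ Finset.univ.erase j, (X - C (lam l)))
        = d * (∑ j, C (h j * w j) * ∏ l ∈ Finset.univ.erase j, (X - C (lam l))) :=
  stmt_0_general k n d hprop hdeg lam hlam hpole h hh
end

section
/- Let f = n/d be an irreducible strictly proper rational function over ℂ of degree k ≥ 2. Then the set of nonzero values h ∈ ℂ \ {0} for which there do NOT exist two distinct points λ_1 ≠ λ_2 in ℂ such that f attains the value h at both λ_1 and λ_2 is finite, of cardinality at most 2k−2. -/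
open Polynomial

/-- For an irreducible strictly proper rational function `f = n/d`
of degree `k ≥ 2`, the set of nonzero values `h` that are NOT attained by `f`
at two distinct points of `ℂ` is finite, of cardinality at most `2k − 2`. -/
theorem stmt_3 (n d : Polynomial ℂ) (hd : d ≠ 0) (hirr : IsCoprime n d)
    (hprop : n.degree < d.degree) (k : ℕ) (hk : 2 ≤ k) (hdeg : d.natDegree = k)
    (S : Set ℂ)
    (hS : S = {h : ℂ | h ≠ 0 ∧
      ¬ ∃ l1 l2 : ℂ, l1 ≠ l2 ∧
        (d.eval l1 ≠ 0 ∧ n.eval l1 = h * d.eval l1) ∧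
        (d.eval l2 ≠ 0 ∧ n.eval l2 = h * d.eval l2)}) :
    S.Finite ∧ S.ncard ≤ 2 * k - 2 := by
  set W : Polynomial ℂ := n.derivative * d - n * d.derivative with hWdef
  have hn0 : n ≠ 0 := by
    rintro rfl
    have : IsUnit d := isCoprime_zero_left.mp hirr
    have := natDegree_eq_zero_of_isUnit this
    omega
  have hnd : n.natDegree < d.natDegree := natDegree_lt_natDegree hn0 hprop
  -- coprimality: no common root
  have hcop : ∀ x : ℂ, d.eval x = 0 → n.eval x ≠ 0 := by
    intro x hdx hnx
    obtain ⟨a, b, hab⟩ := hirr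
    have := congrArg (Polynomial.eval x) hab
    simp [hnx, hdx] at this
  -- W ≠ 0
  have hW0 : W ≠ 0 := by
    intro h0
    have heq : n.derivative * d = n * d.derivative := by
      have := sub_eq_zero.mp h0
      exact this
    have hdvd : n ∣ n.derivative * d := ⟨d.derivative, heq⟩
    have hn' : n ∣ n.derivative := hirr.dvd_of_dvd_mul_right hdvd
    have hder0 : n.derivative = 0 := by
      by_contra hne
      have h1 := Polynomial.natDegree_le_of_dvd hn' hne
      have h2 : n.derivative.natDegree < n.natDegree := by
        apply Polynomial.natDegree_derivative_lt
        intro hnz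
        exact hne (by rw [Polynomial.eq_C_of_natDegree_eq_zero hnz]; simp)
      omega
    rw [hder0, zero_mul] at heq
    have hd' : d.derivative = 0 := by
      rcases mul_eq_zero.mp heq.symm with h | h
      · exact absurd h hn0
      · exact h
    have := Polynomial.natDegree_eq_zero_of_derivative_eq_zero hd'
    omega
  -- degree bound on W
  have hWdeg : W.natDegree ≤ 2 * k - 2 := by
    apply le_trans (Polynomial.natDegree_sub_le _ _)
    have h1 : (n.derivative * d).natDegree ≤ 2 * k - 2 := by
      apply le_trans (Polynomial.natDegree_mul_le)
      have := Polynomial.natDegree_derivative_le n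
      omega
    have h2 : (n * d.derivative).natDegree ≤ 2 * k - 2 := by
      apply le_trans (Polynomial.natDegree_mul_le)
      have := Polynomial.natDegree_derivative_le d
      omega
    omega
  -- root set of W
  set R : Set ℂ := {x : ℂ | W.eval x = 0} with hRdef
  have hRfin : R.Finite := by
    have : R ⊆ ↑W.roots.toFinset := by
      intro x hx
      simp only [Finset.mem_coe, Multiset.mem_toFinset, Polynomial.mem_roots hW0]
      exact hx
    exact Set.Finite.subset (W.roots.toFinset : Finset ℂ).finite_toSet this
  have hRcard : R.ncard ≤ 2 * k - 2 := by
    have hsub : R ⊆ ↑W.roots.toFinset := by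
      intro x hx
      simp only [Finset.mem_coe, Multiset.mem_toFinset, Polynomial.mem_roots hW0]
      exact hx
    calc R.ncard ≤ (↑W.roots.toFinset : Set ℂ).ncard :=
          Set.ncard_le_ncard hsub (W.roots.toFinset : Finset ℂ).finite_toSet
      _ = W.roots.toFinset.card := Set.ncard_coe_finset _
      _ ≤ Multiset.card W.roots := Multiset.toFinset_card_le _
      _ ≤ W.natDegree := Polynomial.card_roots' W
      _ ≤ 2 * k - 2 := hWdeg
  -- main inclusion : S ⊆ image of R
  have hmain : S ⊆ (fun x => n.eval x / d.eval x) '' R := by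
    rintro h hh
    rw [hS] at hh
    obtain ⟨hh0, hno⟩ := hh
    set p : Polynomial ℂ := n - C h * d with hpdef
    have hChd : (C h * d).degree = d.degree := by
      rw [Polynomial.degree_C_mul hh0]
    have hpdeg : p.degree = d.degree := by
      rw [hpdef, Polynomial.degree_sub_eq_right_of_degree_lt (by rwa [hChd])]
      exact hChd
    have hp0 : p ≠ 0 := by
      intro hz
      rw [hz] at hpdeg
      exact hd (Polynomial.degree_eq_bot.mp hpdeg.symm)
    have hpnat : p.natDegree = k := by
      rw [← hdeg]
      exact Polynomial.natDegree_eq_of_degree_eq hpdeg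
    -- every root of p is an attainment point
    have hroot : ∀ x : ℂ, p.eval x = 0 → d.eval x ≠ 0 ∧ n.eval x = h * d.eval x := by
      intro x hx
      have hev : n.eval x - h * d.eval x = 0 := by
        simpa [hpdef] using hx
      have hdx : d.eval x ≠ 0 := by
        intro hdz
        apply hcop x hdz
        rw [hdz] at hev; simpa using hev
      exact ⟨hdx, by linear_combination hev⟩
    -- p splits, card roots = k
    have hcard : Multiset.card p.roots = k := by
      rw [← hpnat]
      exact (Polynomial.splits_iff_card_roots.mp (IsAlgClosed.splits p))
    have hkpos : 0 < Multiset.card p.roots := by omega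
    obtain ⟨lam, hlam⟩ := Multiset.card_pos_iff_exists_mem.mp hkpos
    -- all roots equal lam
    have hall : ∀ x ∈ p.roots, x = lam := by
      intro x hx
      by_contra hne
      have h1 := hroot x ((Polynomial.mem_roots hp0).mp hx)
      have h2 := hroot lam ((Polynomial.mem_roots hp0).mp hlam)
      exact hno ⟨x, lam, hne, h1, h2⟩
    have hrepl : p.roots = Multiset.replicate k lam := by
      rw [Multiset.eq_replicate]
      exact ⟨hcard, hall⟩
    have hmult : p.rootMultiplicity lam = k := by
      rw [← Polynomial.count_roots, hrepl, Multiset.count_replicate_self]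
    have hplam : p.IsRoot lam := (Polynomial.mem_roots hp0).mp hlam
    have hder : p.derivative.rootMultiplicity lam = k - 1 := by
      rw [Polynomial.derivative_rootMultiplicity_of_root hplam, hmult]
    have hpder0 : p.derivative ≠ 0 := by
      intro hz
      have := Polynomial.natDegree_eq_zero_of_derivative_eq_zero hz
      omega
    have hderroot : p.derivative.IsRoot lam := by
      rw [← Polynomial.rootMultiplicity_pos hpder0, hder]
      omega
    -- unpack
    obtain ⟨hdlam, hnlam⟩ := hroot lam hplam
    have hdevd : p.derivative = n.derivative - C h * d.derivative := by
      rw [hpdef]; simp [Polynomial.derivative_sub, Polynomial.derivative_C_mul]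
    have hn'lam : n.derivative.eval lam = h * d.derivative.eval lam := by
      have := hderroot
      rw [hdevd] at this
      unfold Polynomial.IsRoot at this
      simp only [Polynomial.eval_sub, Polynomial.eval_mul, Polynomial.eval_C] at this
      linear_combination this
    refine ⟨lam, ?_, ?_⟩
    · show W.eval lam = 0
      rw [hWdef]
      simp only [Polynomial.eval_sub, Polynomial.eval_mul]
      linear_combination (d.eval lam) * hn'lam - (d.derivative.eval lam) * hnlam
    · show n.eval lam / d.eval lam = h
      rw [div_eq_iff hdlam, hnlam, mul_comm]
  refine ⟨Set.Finite.subset (hRfin.image _) hmain, ?_⟩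
  calc S.ncard ≤ ((fun x => n.eval x / d.eval x) '' R).ncard :=
        Set.ncard_le_ncard hmain (hRfin.image _)
    _ ≤ R.ncard := Set.ncard_image_le hRfin
    _ ≤ 2 * k - 2 := hRcard
end

section
/- Let f = n/d be an irreducible strictly proper rational function over ℂ of degree 2k with k ≥ 1. Then there exist 2k pairwise distinct points λ̃_1,…,λ̃_k, σ̃_1,…,σ̃_k ∈ ℂ, none of which is a root of d, values h̃_1,…,h̃_k ∈ ℂ with n(λ̃_j) = h̃_j·d(λ̃_j) and n(σ̃_j) = h̃_j·d(σ̃_j) for every j, and weights w̃_1,…,w̃_{2k} ∈ ℂ such that f(s) = (Σ_{j=1}^k (h̃_j w̃_j/(s−λ̃_j) + h̃_j w̃_{j+k}/(s−σ̃_j))) / (1 + Σ_{j=1}^k (w̃_j/(s−λ̃_j) + w̃_{j+k}/(s−σ̃_j))) as rational functions. -/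
open Polynomial Lagrange Finset

/-!
Write `f = n / d`. Off a finite set, `f` is regular and nonzero with `f' ≠ 0` (the Wronskian
`n d' - n' d` is nonzero by coprimality), and it takes infinitely many values there; so we can pick
`λ₁, …, λₖ` there with pairwise distinct values `hⱼ = f(λⱼ)`. Each `λⱼ` is a simple root of
`hⱼ d - n`, a polynomial of degree `2k ≥ 2`, whose second root `σⱼ` has `f(σⱼ) = hⱼ`.

For the `2k` nodes `μᵢ` with values `Hᵢ`, let `qᵢ = (Hᵢ d - n) / (X - μᵢ)` and
`ℓᵢ = ∏_{j ≠ i} (X - μⱼ)`. For weights `c`, the barycentric identity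
`n (∏ (X - μⱼ) + ∑ cᵢ ℓᵢ) = d ∑ cᵢ Hᵢ ℓᵢ` is equivalent to `n = ∑ cᵢ qᵢ`. The `qᵢ` are linearly
independent: a relation `∑ gᵢ qᵢ = 0` gives `n ∑ gᵢ ℓᵢ = d ∑ gᵢ Hᵢ ℓᵢ`, and since
`deg ∑ gᵢ ℓᵢ < 2k = deg d`, coprimality forces `∑ gᵢ ℓᵢ = 0`, i.e. `g = 0`. Hence the `2k`
polynomials `qᵢ` span the polynomials of degree `< 2k`, which contain `n`.
-/

section Values

variable {K : Type*} [Field K]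

lemma C_mul_sub_ne_zero {n d : K[X]} (hn : n ≠ 0) (hnd : n.degree < d.degree) (a : K) :
    C a * d - n ≠ 0 := by
  rw [sub_ne_zero]
  rintro h
  rcases eq_or_ne a 0 with rfl | ha
  · exact hn (by simpa using h.symm)
  · exact hnd.ne (by rw [← h, degree_C_mul ha])

lemma eval_ne_zero_of_isCoprime {n d : K[X]} (hnd : IsCoprime n d) {z : K} (hdz : d.eval z = 0) :
    n.eval z ≠ 0 := by
  intro hnz
  obtain ⟨u, v, huv⟩ := hnd
  simpa [hnz, hdz] using congrArg (eval z) huv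

lemma infinite_image_eval_div [Infinite K] {n d W : K[X]} (hn : n ≠ 0) (hnd : n.degree < d.degree)
    (hW : W ≠ 0) : ((fun z => n.eval z / d.eval z) '' {z | W.eval z ≠ 0}).Infinite := by
  intro hfin
  have hQ : W * d * ∏ t ∈ hfin.toFinset, (C t * d - n) ≠ 0 :=
    mul_ne_zero (mul_ne_zero hW (ne_zero_of_degree_gt hnd))
      (prod_ne_zero_iff.2 fun t _ => C_mul_sub_ne_zero hn hnd t)
  refine hQ (zero_of_eval_zero _ fun z => ?_)
  by_cases hWz : W.eval z = 0
  · simp [hWz]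
  by_cases hdz : d.eval z = 0
  · simp [hdz]
  have hz : n.eval z / d.eval z ∈ hfin.toFinset := hfin.mem_toFinset.2 ⟨z, hWz, rfl⟩
  rw [eval_mul, eval_prod, prod_eq_zero hz (by simp [div_mul_cancel₀ _ hdz]), mul_zero]

lemma exists_fin_injective_comp_of_infinite_image {α β : Type*} {g : α → β} {s : Set α}
    (hs : (g '' s).Infinite) (k : ℕ) :
    ∃ x : Fin k → α, (∀ j, x j ∈ s) ∧ Function.Injective (g ∘ x) := by
  choose x hxs hgx using fun j : Fin k => (hs.natEmbedding _ j).2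
  refine ⟨x, hxs, fun i j hij => Fin.val_injective ((hs.natEmbedding _).injective ?_)⟩
  exact Subtype.ext (by simpa only [Function.comp_apply, hgx] using hij)

lemma wronskian_ne_zero_of_isCoprime [CharZero K] {n d : K[X]} (hnd : IsCoprime n d)
    (hd : d.natDegree ≠ 0) : wronskian n d ≠ 0 :=
  fun h => hd (derivative_eq_zero.1 ((hnd.wronskian_eq_zero_iff.1 h).2))

lemma exists_isRoot_ne_of_eval_derivative_ne_zero [IsAlgClosed K] {p : K[X]}
    (hp : 2 ≤ p.natDegree) {a : K} (ha : p.IsRoot a) (ha' : (derivative p).eval a ≠ 0) :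
    ∃ b, p.IsRoot b ∧ b ≠ a := by
  set q := p /ₘ (X - C a)
  have hpq : (X - C a) * q = p := mul_divByMonic_eq_iff_isRoot.2 ha
  have hqa : q.eval a = (derivative p).eval a := by
    simp [← hpq, derivative_mul]
  have hq : q.degree ≠ 0 := by
    refine (natDegree_pos_iff_degree_pos.1 ?_).ne'
    rw [natDegree_divByMonic _ (monic_X_sub_C a), natDegree_X_sub_C]
    omega
  obtain ⟨b, hb⟩ := IsAlgClosed.exists_root q hq
  refine ⟨b, by rw [← hpq, IsRoot, eval_mul, hb.eq_zero, mul_zero], ?_⟩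
  rintro rfl
  exact ha' (hqa ▸ hb)

lemma exists_ne_eval_div_eq [IsAlgClosed K] {n d : K[X]} (hnd : IsCoprime n d)
    (hdeg : n.degree < d.degree) (hd2 : 2 ≤ d.natDegree) {a : K} (hda : d.eval a ≠ 0)
    (hna : n.eval a ≠ 0) (hwa : (wronskian n d).eval a ≠ 0) :
    ∃ b, b ≠ a ∧ d.eval b ≠ 0 ∧ n.eval b = n.eval a / d.eval a * d.eval b := by
  set v := n.eval a / d.eval a
  have hv : v ≠ 0 := div_ne_zero hna hda
  have hp : (C v * d - n).natDegree = d.natDegree := by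
    refine natDegree_eq_of_degree_eq ?_
    rw [degree_sub_eq_left_of_degree_lt, degree_C_mul hv]
    rwa [degree_C_mul hv]
  have ha : (C v * d - n).IsRoot a := by
    simp [v, div_mul_cancel₀ _ hda]
  have hw : (wronskian n d).eval a = d.eval a * (derivative (C v * d - n)).eval a := by
    simp only [wronskian, derivative_sub, derivative_mul, derivative_C, zero_mul, zero_add,
      eval_sub, eval_mul, eval_C, v]
    field_simp
  have ha' : (derivative (C v * d - n)).eval a ≠ 0 := right_ne_zero_of_mul (hw ▸ hwa)
  obtain ⟨b, hb, hba⟩ := exists_isRoot_ne_of_eval_derivative_ne_zero (hp ▸ hd2) ha ha'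
  have hb' : n.eval b = v * d.eval b := by
    have hb0 := hb.eq_zero
    simp only [eval_sub, eval_mul, eval_C] at hb0
    linear_combination -hb0
  refine ⟨b, hba, fun hdb => eval_ne_zero_of_isCoprime hnd hdb (by simp [hb', hdb]), hb'⟩

lemma exists_paired_nodes [IsAlgClosed K] [CharZero K] {n d : K[X]} (hnd : IsCoprime n d)
    (hdeg : n.degree < d.degree) (hd2 : 2 ≤ d.natDegree) (k : ℕ) :
    ∃ lam sig val : Fin k → K, Function.Injective (Sum.elim lam sig) ∧
      (∀ j, d.eval (lam j) ≠ 0) ∧ (∀ j, d.eval (sig j) ≠ 0) ∧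
      (∀ j, n.eval (lam j) = val j * d.eval (lam j)) ∧
      (∀ j, n.eval (sig j) = val j * d.eval (sig j)) := by
  have hn : n ≠ 0 := by
    rintro rfl
    have := natDegree_eq_zero_of_isUnit (isCoprime_zero_left.1 hnd)
    omega
  have hW : d * n * wronskian n d ≠ 0 := mul_ne_zero (mul_ne_zero (ne_zero_of_degree_gt hdeg) hn)
    (wronskian_ne_zero_of_isCoprime hnd (by omega))
  obtain ⟨lam, hlam, hval⟩ :=
    exists_fin_injective_comp_of_infinite_image (infinite_image_eval_div hn hdeg hW) k
  simp only [eval_mul, mul_ne_zero_iff] at hlam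
  choose sig hsig_ne hsig_d hsig_n using fun j =>
    exists_ne_eval_div_eq hnd hdeg hd2 (hlam j).1.1 (hlam j).1.2 (hlam j).2
  set val := fun j => n.eval (lam j) / d.eval (lam j)
  have hsig_val : ∀ j, n.eval (sig j) / d.eval (sig j) = val j :=
    fun j => by rw [hsig_n j, mul_div_cancel_right₀ _ (hsig_d j)]
  have hsig : Function.Injective sig := fun i j hij =>
    hval (show val i = val j by rw [← hsig_val i, ← hsig_val j, hij])
  have hlam_sig : ∀ i j, lam i ≠ sig j := fun i j he =>
    hsig_ne j (hval (show val i = val j by rw [← hsig_val j, ← he]) ▸ he).symm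
  exact ⟨lam, sig, val, hval.of_comp.sumElim hsig hlam_sig, fun j => (hlam j).1.1, hsig_d,
    fun j => (div_mul_cancel₀ _ (hlam j).1.1).symm, hsig_n⟩

end Values

section Weights

variable {K ι : Type*} [Field K] [Fintype ι] [DecidableEq ι] {μ : ι → K}

lemma degree_sum_C_mul_nodal_erase_lt (g : ι → K) :
    (∑ j, C (g j) * nodal (univ.erase j) μ).degree < Fintype.card ι := by
  refine (degree_sum_le _ _).trans_lt
    ((Finset.sup_lt_iff (WithBot.bot_lt_coe _)).2 fun j _ => ?_)
  rcases eq_or_ne (g j) 0 with hg | hg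
  · simp [hg]
  have : Nonempty ι := ⟨j⟩
  rw [degree_C_mul hg, degree_nodal, card_erase_of_mem (mem_univ j), card_univ]
  exact_mod_cast Nat.sub_lt Fintype.card_pos one_pos

lemma eval_sum_C_mul_nodal_erase (g : ι → K) (i : ι) :
    (∑ j, C (g j) * nodal (univ.erase j) μ).eval (μ i)
      = g i * (nodal (univ.erase i) μ).eval (μ i) := by
  rw [eval_finsetSum, sum_eq_single i (fun j _ hji => ?_) (by simp)]
  · simp
  · rw [eval_mul, eval_nodal_at_node (mem_erase.2 ⟨hji.symm, mem_univ i⟩), mul_zero]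

lemma eval_nodal_erase_ne_zero (hμ : Function.Injective μ) (i : ι) :
    (nodal (univ.erase i) μ).eval (μ i) ≠ 0 :=
  eval_nodal_not_at_node fun _ hj => hμ.ne (mem_erase.1 hj).1.symm

variable {n d : K[X]} {H : ι → K} {q : ι → K[X]}

lemma nodal_mul_sum_smul (hq : ∀ i, (X - C (μ i)) * q i = C (H i) * d - n) (g : ι → K) :
    nodal univ μ * ∑ i, g i • q i
      = d * ∑ i, C (H i) * C (g i) * nodal (univ.erase i) μ
        - n * ∑ i, C (g i) * nodal (univ.erase i) μ := by
  simp only [mul_sum, ← sum_sub_distrib, smul_eq_C_mul]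
  refine sum_congr rfl fun i _ => ?_
  rw [nodal_eq_mul_nodal_erase (mem_univ i)]
  linear_combination (C (g i) * nodal (univ.erase i) μ) * hq i

lemma linearIndependent_of_X_sub_C_mul_eq (hμ : Function.Injective μ) (hnd : IsCoprime n d)
    (hcard : Fintype.card ι ≤ d.natDegree) (hq : ∀ i, (X - C (μ i)) * q i = C (H i) * d - n) :
    LinearIndependent K q := by
  rw [Fintype.linearIndependent_iff]
  intro g hg i
  have hrel := nodal_mul_sum_smul hq g
  rw [hg, mul_zero, eq_comm, sub_eq_zero] at hrel
  have hL : ∑ j, C (g j) * nodal (univ.erase j) μ = 0 := by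
    by_contra hL
    have := natDegree_le_of_dvd (hnd.symm.dvd_of_dvd_mul_left ⟨_, hrel.symm⟩) hL
    have := (natDegree_lt_iff_degree_lt hL).2 (degree_sum_C_mul_nodal_erase_lt g)
    omega
  have hgi : g i * (nodal (univ.erase i) μ).eval (μ i) = 0 := by
    rw [← eval_sum_C_mul_nodal_erase, hL, eval_zero]
  exact (mul_eq_zero.1 hgi).resolve_right (eval_nodal_erase_ne_zero hμ i)

lemma exists_sum_smul_eq_of_X_sub_C_mul_eq (hμ : Function.Injective μ) (hnd : IsCoprime n d)
    (hdeg : n.degree < d.degree) (hcard : Fintype.card ι = d.natDegree)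
    (hq : ∀ i, (X - C (μ i)) * q i = C (H i) * d - n) : ∃ c : ι → K, ∑ i, c i • q i = n := by
  have hd : d.degree = d.natDegree := degree_eq_natDegree (ne_zero_of_degree_gt hdeg)
  have hle : Submodule.span K (Set.range q) ≤ degreeLT K d.natDegree := by
    rw [Submodule.span_le]
    rintro _ ⟨i, rfl⟩
    rw [SetLike.mem_coe, mem_degreeLT]
    rcases eq_or_ne (q i) 0 with h0 | h0
    · simp [h0]
    rw [degree_eq_natDegree h0, Nat.cast_lt]
    have hqi := congrArg natDegree (hq i)
    rw [natDegree_mul (X_sub_C_ne_zero _) h0, natDegree_X_sub_C] at hqi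
    have : (C (H i) * d - n).natDegree ≤ d.natDegree :=
      (natDegree_sub_le_of_le (natDegree_C_mul_le _ _) (natDegree_le_natDegree hdeg.le)).trans_eq
        (max_self _)
    omega
  have hspan : Submodule.span K (Set.range q) = degreeLT K d.natDegree := by
    refine Submodule.eq_of_le_of_finrank_le hle ?_
    rw [finrank_span_eq_card (linearIndependent_of_X_sub_C_mul_eq hμ hnd hcard.le hq), hcard,
      (degreeLTEquiv K _).finrank_eq, Module.finrank_fin_fun]
  exact (Submodule.mem_span_range_iff_exists_fun K).1 (hspan ▸ mem_degreeLT.2 (hd ▸ hdeg))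

lemma exists_barycentric_weights (hμ : Function.Injective μ) (hnd : IsCoprime n d)
    (hdeg : n.degree < d.degree) (hcard : Fintype.card ι = d.natDegree)
    (hH : ∀ i, n.eval (μ i) = H i * d.eval (μ i)) :
    ∃ c : ι → K, n * (nodal univ μ + ∑ i, C (c i) * nodal (univ.erase i) μ)
      = d * ∑ i, C (H i) * C (c i) * nodal (univ.erase i) μ := by
  have hq : ∀ i, (X - C (μ i)) * ((C (H i) * d - n) /ₘ (X - C (μ i))) = C (H i) * d - n :=
    fun i => mul_divByMonic_eq_iff_isRoot.2 (by simp [hH])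
  obtain ⟨c, hc⟩ := exists_sum_smul_eq_of_X_sub_C_mul_eq hμ hnd hdeg hcard hq
  exact ⟨c, by linear_combination nodal_mul_sum_smul hq c - nodal univ μ * hc⟩

end Weights

section Pairs

variable {R ι : Type*} [CommRing R] [Fintype ι] (a b : ι → R)

lemma nodal_sumElim : nodal univ (Sum.elim a b) = ∏ j, (X - C (a j)) * (X - C (b j)) := by
  simp [nodal, Fintype.prod_sum_type, prod_mul_distrib]

variable [DecidableEq ι] [IsDomain R]

lemma nodal_erase_inl (j : ι) : nodal (univ.erase (Sum.inl j)) (Sum.elim a b)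
    = (X - C (b j)) * ∏ l ∈ univ.erase j, (X - C (a l)) * (X - C (b l)) := by
  have h := nodal_eq_mul_nodal_erase (v := Sum.elim a b) (mem_univ (Sum.inl j))
  rw [nodal_sumElim, ← mul_prod_erase univ _ (mem_univ j), Sum.elim_inl, mul_assoc] at h
  exact mul_left_cancel₀ (X_sub_C_ne_zero (a j)) h.symm

lemma nodal_erase_inr (j : ι) : nodal (univ.erase (Sum.inr j)) (Sum.elim a b)
    = (X - C (a j)) * ∏ l ∈ univ.erase j, (X - C (a l)) * (X - C (b l)) := by
  have h := nodal_eq_mul_nodal_erase (v := Sum.elim a b) (mem_univ (Sum.inr j))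
  rw [nodal_sumElim, ← mul_prod_erase univ _ (mem_univ j), Sum.elim_inr, mul_comm (X - C (a j)),
    mul_assoc] at h
  exact mul_left_cancel₀ (X_sub_C_ne_zero (b j)) h.symm

lemma sum_sumElim_mul_nodal_erase (F : ι ⊕ ι → R[X]) :
    ∑ i, F i * nodal (univ.erase i) (Sum.elim a b)
      = ∑ j, (F (Sum.inl j) * (X - C (b j)) + F (Sum.inr j) * (X - C (a j)))
          * ∏ l ∈ univ.erase j, (X - C (a l)) * (X - C (b l)) := by
  rw [Fintype.sum_sum_type, ← sum_add_distrib]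
  refine sum_congr rfl fun j _ => ?_
  rw [nodal_erase_inl, nodal_erase_inr]
  ring

end Pairs

theorem stmt_4_general (k : ℕ) (hk : 1 ≤ k) (n d : Polynomial ℂ)
    (hirr : IsCoprime n d) (hprop : n.degree < d.degree) (hdeg : d.natDegree = 2 * k) :
    ∃ (lamT sigT hT w1 w2 : Fin k → ℂ),
      Function.Injective lamT ∧ Function.Injective sigT ∧
      (∀ i j, lamT i ≠ sigT j) ∧
      (∀ j, d.eval (lamT j) ≠ 0) ∧ (∀ j, d.eval (sigT j) ≠ 0) ∧
      (∀ j, n.eval (lamT j) = hT j * d.eval (lamT j)) ∧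
      (∀ j, n.eval (sigT j) = hT j * d.eval (sigT j)) ∧
      n * ((∏ j, (X - C (lamT j)) * (X - C (sigT j))) +
            ∑ j, (C (w1 j) * (X - C (sigT j)) + C (w2 j) * (X - C (lamT j))) *
              ∏ l ∈ Finset.univ.erase j, (X - C (lamT l)) * (X - C (sigT l)))
        = d * (∑ j, C (hT j) * (C (w1 j) * (X - C (sigT j)) + C (w2 j) * (X - C (lamT j))) *
              ∏ l ∈ Finset.univ.erase j, (X - C (lamT l)) * (X - C (sigT l))) := by
  obtain ⟨lam, sig, val, hμ, hlam_d, hsig_d, hlam_n, hsig_n⟩ :=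
    exists_paired_nodes hirr hprop (by omega) k
  obtain ⟨c, hc⟩ := exists_barycentric_weights hμ hirr hprop (H := Sum.elim val val)
    (by simp [hdeg]; omega) (by rintro (j | j); exacts [hlam_n j, hsig_n j])
  refine ⟨lam, sig, val, fun j => c (Sum.inl j), fun j => c (Sum.inr j),
    hμ.comp Sum.inl_injective, hμ.comp Sum.inr_injective, fun i j => hμ.ne Sum.inl_ne_inr,
    hlam_d, hsig_d, hlam_n, hsig_n, ?_⟩
  rw [nodal_sumElim, sum_sumElim_mul_nodal_erase, sum_sumElim_mul_nodal_erase] at hc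
  simp only [Sum.elim_inl, Sum.elim_inr] at hc
  convert hc using 3 with j
  ring

/-- Any irreducible strictly proper rational function `f = n/d` of degree
`2k` admits an unstructured barycentric representation with `2k` pairwise distinct
support points `λ̃_1,…,λ̃_k, σ̃_1,…,σ̃_k` (none a pole of `f`) and only `k` distinct
function values `h̃_j = f(λ̃_j) = f(σ̃_j)`, each appearing twice: there are weights
`w̃_1,…,w̃_{2k}` (here `w1 j = w̃_j`, `w2 j = w̃_{j+k}`) with `n · D = d · N` for the
cleared numerator `N` and denominator `D` of that barycentric form. -/
theorem stmt_4 (k : ℕ) (hk : 1 ≤ k) (n d : Polynomial ℂ) (hd : d ≠ 0)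
    (hirr : IsCoprime n d) (hprop : n.degree < d.degree) (hdeg : d.natDegree = 2 * k) :
    ∃ (lamT sigT hT w1 w2 : Fin k → ℂ),
      Function.Injective lamT ∧ Function.Injective sigT ∧
      (∀ i j, lamT i ≠ sigT j) ∧
      (∀ j, d.eval (lamT j) ≠ 0) ∧ (∀ j, d.eval (sigT j) ≠ 0) ∧
      (∀ j, n.eval (lamT j) = hT j * d.eval (lamT j)) ∧
      (∀ j, n.eval (sigT j) = hT j * d.eval (sigT j)) ∧
      n * ((∏ j, (X - C (lamT j)) * (X - C (sigT j))) +
            ∑ j, (C (w1 j) * (X - C (sigT j)) + C (w2 j) * (X - C (lamT j))) *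
              ∏ l ∈ Finset.univ.erase j, (X - C (lamT l)) * (X - C (sigT l)))
        = d * (∑ j, C (hT j) * (C (w1 j) * (X - C (sigT j)) + C (w2 j) * (X - C (lamT j))) *
              ∏ l ∈ Finset.univ.erase j, (X - C (lamT l)) * (X - C (sigT l))) :=
  stmt_4_general k hk n d hirr hprop hdeg
end

section
/- Let λ_1,…,λ_k, σ_1,…,σ_k ∈ ℂ be 2k pairwise distinct points, h_1,…,h_k ∈ ℂ, and w_1,…,w_{2k} ∈ ℂ, and let f(s) = (Σ_{j=1}^k (h_j w_j/(s−λ_j) + h_j w_{j+k}/(s−σ_j))) / (1 + Σ_{j=1}^k (w_j/(s−λ_j) + w_{j+k}/(s−σ_j))). Assume that f, written in lowest terms, has degree exactly 2k. If there exist v_1,…,v_k ∈ ℂ such that f equals the second-order barycentric form with support points λ_j, quasi-support points σ_j, function values h_j and weights v_j, then w_j = −w_{j+k} for every j = 1,…,k, and moreover v_j = w_j(λ_j − σ_j). -/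
open Polynomial BigOperators

/-- If a degree-`2k` (in lowest terms, i.e. `N` and `D` coprime)
rational function given by an unstructured barycentric form with `2k` pairwise
distinct support points `λ_j, σ_j` and `k` doubled function values `h_j` equals
a second-order barycentric form with support points `λ_j`, quasi-support points
`σ_j`, values `h_j` and weights `v_j`, then `w_j = −w_{j+k}` (here `w1 j = w_j`,
`w2 j = w_{j+k}`) and `v_j = w_j(λ_j − σ_j)` for every `j`. -/
theorem stmt_5 (k : ℕ) (lam sig h : Fin k → ℂ) (w1 w2 : Fin k → ℂ)
    (hlam : Function.Injective lam) (hsig : Function.Injective sig)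
    (hls : ∀ i j, lam i ≠ sig j)
    (N D : Polynomial ℂ)
    (hN : N = ∑ j, C (h j) * (C (w1 j) * (X - C (sig j)) + C (w2 j) * (X - C (lam j))) *
          ∏ l ∈ Finset.univ.erase j, (X - C (lam l)) * (X - C (sig l)))
    (hD : D = (∏ j, (X - C (lam j)) * (X - C (sig j))) +
          ∑ j, (C (w1 j) * (X - C (sig j)) + C (w2 j) * (X - C (lam j))) *
          ∏ l ∈ Finset.univ.erase j, (X - C (lam l)) * (X - C (sig l)))
    (hlow : IsCoprime N D)
    (v : Fin k → ℂ)
    (heq : N * ((∏ j, (X - C (lam j)) * (X - C (sig j))) +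
            ∑ j, C (v j) * ∏ l ∈ Finset.univ.erase j, (X - C (lam l)) * (X - C (sig l)))
        = D * (∑ j, C (h j * v j) *
            ∏ l ∈ Finset.univ.erase j, (X - C (lam l)) * (X - C (sig l)))) :
    ∀ j, w1 j = - w2 j ∧ v j = w1 j * (lam j - sig j) := by
  rcases Nat.eq_zero_or_pos k with hk | hk
  · subst hk; exact fun j => j.elim0
  set P : Polynomial ℂ := ∏ j, (X - C (lam j)) * (X - C (sig j)) with hPdef
  set Q : Fin k → Polynomial ℂ :=
    fun j => ∏ l ∈ Finset.univ.erase j, (X - C (lam l)) * (X - C (sig l)) with hQdef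
  set T : Polynomial ℂ :=
    ∑ j, (C (w1 j) * (X - C (sig j)) + C (w2 j) * (X - C (lam j))) * Q j with hTdef
  set S : Polynomial ℂ := ∑ j, C (v j) * Q j with hSdef
  -- degree bounds
  have hQle : ∀ j, (Q j).natDegree ≤ 2 * (k - 1) := by
    intro j
    calc (Q j).natDegree
        ≤ ∑ l ∈ Finset.univ.erase j, ((X - C (lam l)) * (X - C (sig l))).natDegree :=
          Polynomial.natDegree_prod_le _ _
      _ ≤ ∑ l ∈ Finset.univ.erase j, 2 :=
          Finset.sum_le_sum
            (f := fun l => ((X - C (lam l)) * (X - C (sig l))).natDegree)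
            (g := fun _ => 2) (fun l _ => by
          refine le_trans (Polynomial.natDegree_mul_le) ?_
          simp [Polynomial.natDegree_X_sub_C])
      _ = 2 * (k - 1) := by
          rw [Finset.sum_const, Finset.card_erase_of_mem (Finset.mem_univ _),
            Finset.card_univ, Fintype.card_fin, smul_eq_mul]
          omega
  have hsum_deg : ∀ a : Fin k → Polynomial ℂ, (∀ j, (a j).natDegree ≤ 1) →
      (∑ j, a j * Q j).degree < ((2 * k : ℕ) : WithBot ℕ) := by
    intro a ha
    refine lt_of_le_of_lt (Polynomial.degree_sum_le _ _) ?_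
    rw [Finset.sup_lt_iff (by exact_mod_cast WithBot.bot_lt_coe _)]
    intro j _
    refine lt_of_le_of_lt (Polynomial.degree_le_natDegree) ?_
    have h1 : (a j * Q j).natDegree ≤ 2 * k - 1 := by
      have h2 := Polynomial.natDegree_mul_le (p := a j) (q := Q j)
      have h3 := hQle j
      have h4 := ha j
      omega
    have h5 : ((2 * k - 1 : ℕ) : WithBot ℕ) < ((2 * k : ℕ) : WithBot ℕ) := by
      exact_mod_cast (show 2 * k - 1 < 2 * k by omega)
    exact lt_of_le_of_lt (by exact_mod_cast h1) h5
  have hTdeg : T.degree < ((2 * k : ℕ) : WithBot ℕ) := by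
    refine hsum_deg _ (fun j => ?_)
    refine le_trans (Polynomial.natDegree_add_le _ _) ?_
    have b1 : (C (w1 j) * (X - C (sig j))).natDegree ≤ 1 :=
      le_trans (Polynomial.natDegree_C_mul_le _ _) (by simp [Polynomial.natDegree_X_sub_C])
    have b2 : (C (w2 j) * (X - C (lam j))).natDegree ≤ 1 :=
      le_trans (Polynomial.natDegree_C_mul_le _ _) (by simp [Polynomial.natDegree_X_sub_C])
    omega
  have hSdeg : S.degree < ((2 * k : ℕ) : WithBot ℕ) := by
    refine hsum_deg _ (fun j => by simp)
  have hPmonic : P.Monic :=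
    monic_prod_of_monic _ _ (fun j _ => (monic_X_sub_C _).mul (monic_X_sub_C _))
  have hPdeg : P.degree = ((2 * k : ℕ) : WithBot ℕ) := by
    rw [hPdef, Polynomial.degree_prod]
    have : ∀ j : Fin k, ((X - C (lam j)) * (X - C (sig j))).degree = (2 : WithBot ℕ) := by
      intro j
      rw [Polynomial.degree_mul, Polynomial.degree_X_sub_C, Polynomial.degree_X_sub_C]
      rfl
    rw [Finset.sum_congr rfl (fun j _ => this j), Finset.sum_const, Finset.card_univ,
      Fintype.card_fin]
    simp [mul_comm]
  have hDdeg : D.degree = ((2 * k : ℕ) : WithBot ℕ) := by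
    rw [hD, Polynomial.degree_add_eq_left_of_degree_lt (by rw [hPdeg]; exact hTdeg), hPdeg]
  -- divisibility
  have h1 : D ∣ N * (P + S) := ⟨_, heq⟩
  have hdvd : D ∣ (P + S) := hlow.symm.dvd_of_dvd_mul_left h1
  have hdvd2 : D ∣ (S - T) := by
    have heq2 : P + S = D + (S - T) := by rw [hD]; ring
    rw [heq2] at hdvd
    exact (dvd_add_right (dvd_refl D)).mp hdvd
  have hST : S - T = 0 := by
    refine Polynomial.eq_zero_of_dvd_of_degree_lt hdvd2 ?_
    rw [hDdeg]
    exact lt_of_le_of_lt (Polynomial.degree_sub_le _ _) (max_lt hSdeg hTdeg)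
  have hST' : S = T := sub_eq_zero.mp hST
  -- evaluation
  have hQzero_l : ∀ j i : Fin k, j ≠ i → Polynomial.eval (lam i) (Q j) = 0 := by
    intro j i hji
    rw [hQdef]
    simp only [Polynomial.eval_prod]
    refine Finset.prod_eq_zero (Finset.mem_erase.mpr ⟨Ne.symm hji, Finset.mem_univ i⟩) ?_
    simp
  have hQzero_s : ∀ j i : Fin k, j ≠ i → Polynomial.eval (sig i) (Q j) = 0 := by
    intro j i hji
    rw [hQdef]
    simp only [Polynomial.eval_prod]
    refine Finset.prod_eq_zero (Finset.mem_erase.mpr ⟨Ne.symm hji, Finset.mem_univ i⟩) ?_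
    simp
  intro i
  have hQl_ne : Polynomial.eval (lam i) (Q i) ≠ 0 := by
    rw [hQdef]
    simp only [Polynomial.eval_prod]
    rw [Finset.prod_ne_zero_iff]
    intro l hl
    rw [Finset.mem_erase] at hl
    simp only [Polynomial.eval_mul, Polynomial.eval_sub, Polynomial.eval_X, Polynomial.eval_C]
    exact mul_ne_zero (sub_ne_zero.mpr (fun hc => hl.1 (hlam hc).symm))
      (sub_ne_zero.mpr (hls i l))
  have hQs_ne : Polynomial.eval (sig i) (Q i) ≠ 0 := by
    rw [hQdef]
    simp only [Polynomial.eval_prod]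
    rw [Finset.prod_ne_zero_iff]
    intro l hl
    rw [Finset.mem_erase] at hl
    simp only [Polynomial.eval_mul, Polynomial.eval_sub, Polynomial.eval_X, Polynomial.eval_C]
    exact mul_ne_zero (sub_ne_zero.mpr (fun hc => hls l i hc.symm))
      (sub_ne_zero.mpr (fun hc => hl.1 (hsig hc).symm))
  have hl : v i = w1 i * (lam i - sig i) := by
    have h := congrArg (Polynomial.eval (lam i)) hST'
    rw [hSdef, hTdef, Polynomial.eval_finset_sum, Polynomial.eval_finset_sum,
      Finset.sum_eq_single_of_mem i (Finset.mem_univ i)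
        (fun j _ hj => by simp [hQzero_l j i hj]),
      Finset.sum_eq_single_of_mem i (Finset.mem_univ i)
        (fun j _ hj => by simp [hQzero_l j i hj])] at h
    simp only [Polynomial.eval_mul, Polynomial.eval_add, Polynomial.eval_sub,
      Polynomial.eval_X, Polynomial.eval_C, sub_self, mul_zero, add_zero] at h
    exact mul_right_cancel₀ hQl_ne h
  have hs : v i = w2 i * (sig i - lam i) := by
    have h := congrArg (Polynomial.eval (sig i)) hST'
    rw [hSdef, hTdef, Polynomial.eval_finset_sum, Polynomial.eval_finset_sum,
      Finset.sum_eq_single_of_mem i (Finset.mem_univ i)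
        (fun j _ hj => by simp [hQzero_s j i hj]),
      Finset.sum_eq_single_of_mem i (Finset.mem_univ i)
        (fun j _ hj => by simp [hQzero_s j i hj])] at h
    simp only [Polynomial.eval_mul, Polynomial.eval_add, Polynomial.eval_sub,
      Polynomial.eval_X, Polynomial.eval_C, sub_self, mul_zero, zero_add] at h
    exact mul_right_cancel₀ hQs_ne h
  refine ⟨?_, hl⟩
  have hne : lam i - sig i ≠ 0 := sub_ne_zero.mpr (hls i i)
  have : w1 i * (lam i - sig i) = (-w2 i) * (lam i - sig i) := by
    rw [← hl, hs]; ring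
  exact mul_right_cancel₀ hne this
end

section
/- Fix pairwise distinct λ_1,…,λ_k ∈ ℂ, vectors h, w ∈ ℂ^k, and a point s ∈ ℂ with s ∉ {λ_1,…,λ_k} and 1 + Σ_{j=1}^k w_j/(s−λ_j) ≠ 0; set Ĥ(s) = (Σ_j h_j w_j/(s−λ_j))/(1 + Σ_j w_j/(s−λ_j)). Let σ^{(m)} ∈ ℂ^k and ŵ^{(m)} ∈ ℂ^k be sequences such that, for each j, ŵ^{(m)}_j → w_j and |Re(σ^{(m)}_j)| → ∞ as m → ∞. Then for all sufficiently large m, the value H_SO^{(m)}(s) = (Σ_j h_j ŵ^{(m)}_j(λ_j−σ^{(m)}_j)/((s−λ_j)(s−σ^{(m)}_j))) / (1 + Σ_j ŵ^{(m)}_j(λ_j−σ^{(m)}_j)/((s−λ_j)(s−σ^{(m)}_j))) is defined (the denominators do not vanish), and H_SO^{(m)}(s) → Ĥ(s) as m → ∞. -/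
open BigOperators Filter Bornology Topology

/-! As `|σ| → ∞`, which `|Re σ| → ∞` forces, the factor `(λ - σ) / (s - σ)` tends to `1`, so each second-order term
`ŵ (λ - σ) / ((s - λ) (s - σ))` tends to the first-order term `w / (s - λ)`. Numerator and
denominator of the second-order form are finite sums of such terms, and the denominator's
limit is nonzero by assumption. -/

variable {α 𝕜 : Type*} [NormedField 𝕜] {l : Filter α}

lemma Complex.tendsto_cobounded_of_tendsto_abs_re {f : α → ℂ}
    (hf : Tendsto (fun m => |(f m).re|) l atTop) : Tendsto f l (cobounded ℂ) :=
  tendsto_norm_atTop_iff_cobounded.mp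
    (tendsto_atTop_mono (fun m => Complex.abs_re_le_norm (f m)) hf)

lemma tendsto_sub_div_sub_of_tendsto_cobounded {f : α → 𝕜} (a b : 𝕜)
    (hf : Tendsto f l (cobounded 𝕜)) :
    Tendsto (fun m => (a - f m) / (b - f m)) l (𝓝 1) := by
  have hinv : Tendsto (fun m => (b - f m)⁻¹) l (𝓝 0) :=
    tendsto_inv₀_cobounded.comp ((tendsto_const_sub_cobounded b).comp hf)
  have hlim : Tendsto (fun m => 1 + (a - b) * (b - f m)⁻¹) l (𝓝 1) := by
    simpa only [mul_zero, add_zero] using (hinv.const_mul (a - b)).const_add 1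
  refine hlim.congr' ?_
  filter_upwards [hf.eventually_ne_cobounded b] with m hm
  have : b - f m ≠ 0 := sub_ne_zero.mpr hm.symm
  field_simp
  ring

lemma tendsto_secondOrder_term {v σ : α → 𝕜} {w : 𝕜} (lam s : 𝕜)
    (hv : Tendsto v l (𝓝 w)) (hσ : Tendsto σ l (cobounded 𝕜)) :
    Tendsto (fun m => v m * (lam - σ m) / ((s - lam) * (s - σ m))) l (𝓝 (w / (s - lam))) := by
  have hlim := (hv.mul (tendsto_sub_div_sub_of_tendsto_cobounded lam s hσ)).div_const (s - lam)
  rw [mul_one] at hlim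
  refine hlim.congr fun m => ?_
  rw [mul_comm (s - lam), ← div_div]
  ring

theorem stmt_7_general (k : ℕ) (lam : Fin k → ℂ)
    (h w : Fin k → ℂ) (s : ℂ)
    (hden : 1 + ∑ j, w j / (s - lam j) ≠ 0)
    (sig : ℕ → Fin k → ℂ) (wh : ℕ → Fin k → ℂ)
    (hwh : ∀ j, Tendsto (fun m => wh m j) atTop (nhds (w j)))
    (hsig : ∀ j, Tendsto (fun m => |(sig m j).re|) atTop atTop) :
    (∀ᶠ m in atTop,
      (∀ j, s ≠ sig m j) ∧
      1 + ∑ j, wh m j * (lam j - sig m j) / ((s - lam j) * (s - sig m j)) ≠ 0)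
    ∧ Tendsto (fun m =>
        (∑ j, h j * (wh m j * (lam j - sig m j)) / ((s - lam j) * (s - sig m j)))
          / (1 + ∑ j, wh m j * (lam j - sig m j) / ((s - lam j) * (s - sig m j))))
      atTop
      (nhds ((∑ j, h j * w j / (s - lam j)) / (1 + ∑ j, w j / (s - lam j)))) := by
  have hσ j := Complex.tendsto_cobounded_of_tendsto_abs_re (hsig j)
  have hterm j := tendsto_secondOrder_term (lam j) s (hwh j) (hσ j)
  have hden_lim : Tendsto
      (fun m => 1 + ∑ j, wh m j * (lam j - sig m j) / ((s - lam j) * (s - sig m j)))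
      atTop (𝓝 (1 + ∑ j, w j / (s - lam j))) :=
    tendsto_const_nhds.add (tendsto_finsetSum _ fun j _ => hterm j)
  have hnum_lim : Tendsto
      (fun m => ∑ j, h j * (wh m j * (lam j - sig m j)) / ((s - lam j) * (s - sig m j)))
      atTop (𝓝 (∑ j, h j * w j / (s - lam j))) := by
    refine tendsto_finsetSum _ fun j _ => ?_
    simpa only [mul_div_assoc] using (hterm j).const_mul (h j)
  have hσ_ne : ∀ᶠ m in atTop, ∀ j, s ≠ sig m j :=
    eventually_all.mpr fun j => ((hσ j).eventually_ne_cobounded s).mono fun _ => Ne.symm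
  exact ⟨hσ_ne.and (hden_lim.eventually_ne hden), hnum_lim.div hden_lim hden⟩

/-- Pointwise convergence of the second-order barycentric form with
weights `ŵ^{(m)}_j(λ_j − σ^{(m)}_j)` to the unstructured barycentric form as
`ŵ^{(m)}_j → w_j` and `|Re σ^{(m)}_j| → ∞`: eventually all denominators are
nonzero and the values converge. -/
theorem stmt_7 (k : ℕ) (lam : Fin k → ℂ) (hlam : Function.Injective lam)
    (h w : Fin k → ℂ) (s : ℂ) (hs : ∀ j, s ≠ lam j)
    (hden : 1 + ∑ j, w j / (s - lam j) ≠ 0)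
    (sig : ℕ → Fin k → ℂ) (wh : ℕ → Fin k → ℂ)
    (hwh : ∀ j, Tendsto (fun m => wh m j) atTop (nhds (w j)))
    (hsig : ∀ j, Tendsto (fun m => |(sig m j).re|) atTop atTop) :
    (∀ᶠ m in atTop,
      (∀ j, s ≠ sig m j) ∧
      1 + ∑ j, wh m j * (lam j - sig m j) / ((s - lam j) * (s - sig m j)) ≠ 0)
    ∧ Tendsto (fun m =>
        (∑ j, h j * (wh m j * (lam j - sig m j)) / ((s - lam j) * (s - sig m j)))
          / (1 + ∑ j, wh m j * (lam j - sig m j) / ((s - lam j) * (s - sig m j))))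
      atTop
      (nhds ((∑ j, h j * w j / (s - lam j)) / (1 + ∑ j, w j / (s - lam j)))) :=
  stmt_7_general k lam h w s hden sig wh hwh hsig
end

section
/- Fix pairwise distinct λ_1,…,λ_k ∈ ℂ with Re(λ_j) ≠ 0 for all j, and h, w ∈ ℂ^k such that 1 + Σ_{j=1}^k w_j/(iω−λ_j) ≠ 0 for every ω ∈ ℝ; set Ĥ(iω) = (Σ_j h_j w_j/(iω−λ_j))/(1 + Σ_j w_j/(iω−λ_j)). Then for every ε > 0 there exist R > 0 and δ > 0 with the following property: for every σ ∈ ℂ^k with |Re(σ_j)| ≥ R for all j and σ_j ≠ λ_l for all j, l, and every ŵ ∈ ℂ^k with |ŵ_j − w_j| ≤ δ for all j, the second-order barycentric form H_SO with support points λ_j, quasi-support points σ_j, values h_j and weights ŵ_j(λ_j−σ_j) satisfies: H_SO(iω) is defined (its denominator 1 + Σ_j ŵ_j(λ_j−σ_j)/((iω−λ_j)(iω−σ_j)) is nonzero) for every ω ∈ ℝ, and sup_{ω∈ℝ} |Ĥ(iω) − H_SO(iω)| ≤ ε. -/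
/-!
Partial fractions give `v (λ - σ) / ((s - λ) (s - σ)) = v / (s - λ) - v / (s - σ)`, and on the
imaginary axis `‖s - λ‖ ≥ |Re λ|` and `‖s - σ‖ ≥ |Re σ|`. Hence, uniformly in `ω`, the numerator
and denominator of `H_SO(iω)` differ from those of `Ĥ(iω)` by `O(δ + 1 / R)`. The denominator of
`Ĥ(iω)` is continuous, never zero and tends to `1` as `|ω| → ∞`, so it is bounded below by some
`d > 0`, and a quotient whose denominator stays away from zero is stable under small perturbations
of numerator and denominator.
-/

open Complex Filter Topology Bornology

lemma abs_re_le_norm_ofReal_mul_I_sub (ω : ℝ) (z : ℂ) : |z.re| ≤ ‖(ω : ℂ) * I - z‖ := by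
  simpa using abs_re_le_norm ((ω : ℂ) * I - z)

lemma ofReal_mul_I_sub_ne_zero (ω : ℝ) {z : ℂ} (hz : z.re ≠ 0) : (ω : ℂ) * I - z ≠ 0 :=
  norm_pos_iff.1 <| (abs_pos.2 hz).trans_le (abs_re_le_norm_ofReal_mul_I_sub ω z)

lemma tendsto_ofReal_mul_I_sub_cocompact (z : ℂ) :
    Tendsto (fun ω : ℝ ↦ (ω : ℂ) * I - z) (cocompact ℝ) (cobounded ℂ) := by
  rw [← Metric.cobounded_eq_cocompact]
  refine (tendsto_sub_const_cobounded z).comp (tendsto_norm_atTop_iff_cobounded.mp ?_)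
  simpa only [norm_mul, norm_I, mul_one, norm_real] using tendsto_norm_cobounded_atTop (E := ℝ)

lemma exists_pos_le_norm_of_tendsto_cocompact {X E : Type*} [TopologicalSpace X] [Nonempty X]
    [NormedAddCommGroup E] {f : X → E} (hf : Continuous f) (hf0 : ∀ x, f x ≠ 0) {a : E}
    (ha : a ≠ 0) (hlim : Tendsto f (cocompact X) (𝓝 a)) : ∃ d > 0, ∀ x, d ≤ ‖f x‖ := by
  have hfar : ∀ᶠ x in cocompact X, ‖a‖ / 2 ≤ ‖f x‖ :=
    hlim.norm.eventually (eventually_ge_nhds (by simpa using norm_pos_iff.2 ha))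
  obtain ⟨x, hx⟩ := (hf.norm.min continuous_const).exists_forall_le' (Classical.arbitrary X)
    (hfar.mono fun y hy ↦ (min_le_right _ _).trans (le_min hy le_rfl))
  refine ⟨min ‖f x‖ (‖a‖ / 2), lt_min (norm_pos_iff.2 (hf0 x)) (by positivity),
    fun y ↦ (hx y).trans (min_le_left _ _)⟩

section NormedField

variable {𝕜 : Type*} [NormedField 𝕜]

lemma mul_sub_div_mul_eq_div_sub_div {s a b : 𝕜} (v : 𝕜) (ha : s - a ≠ 0) (hb : s - b ≠ 0) :
    v * (a - b) / ((s - a) * (s - b)) = v / (s - a) - v / (s - b) := by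
  field_simp
  ring

lemma norm_mul_sub_div_mul_sub_div_le {s a b : 𝕜} (v v' : 𝕜) (ha : s - a ≠ 0) (hb : s - b ≠ 0) :
    ‖v' * (a - b) / ((s - a) * (s - b)) - v / (s - a)‖ ≤ ‖v' - v‖ / ‖s - a‖ + ‖v'‖ / ‖s - b‖ := by
  rw [mul_sub_div_mul_eq_div_sub_div v' ha hb, ← norm_div, ← norm_div]
  calc ‖v' / (s - a) - v' / (s - b) - v / (s - a)‖ = ‖(v' - v) / (s - a) - v' / (s - b)‖ := by
        ring_nf
    _ ≤ _ := norm_sub_le _ _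

lemma norm_div_sub_div_le {N D N' D' : 𝕜} (hD : D ≠ 0) (hD' : D' ≠ 0) :
    ‖N / D - N' / D'‖ ≤ (‖N / D‖ * ‖D' - D‖ + ‖N' - N‖) / ‖D'‖ := by
  have : N / D - N' / D' = (N / D * (D' - D) - (N' - N)) / D' := by
    field_simp
    ring
  rw [this, norm_div, ← norm_mul]
  gcongr
  exact norm_sub_le _ _

lemma norm_div_sub_div_le_of_near {N D N' D' : 𝕜} {M d η : ℝ} (hd : 0 < d) (hD : d ≤ ‖D‖)
    (hM : ‖N / D‖ ≤ M) (hηd : η ≤ d / 2) (hN : ‖N' - N‖ ≤ η) (hDD : ‖D' - D‖ ≤ η) :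
    D' ≠ 0 ∧ ‖N / D - N' / D'‖ ≤ 2 * (M + 1) * η / d := by
  have hη : 0 ≤ η := (norm_nonneg _).trans hN
  have hD'd : d / 2 ≤ ‖D'‖ := by
    linarith [norm_sub_norm_le D D', norm_sub_rev D D']
  have hD' : D' ≠ 0 := norm_pos_iff.1 (by linarith)
  refine ⟨hD', (norm_div_sub_div_le (norm_pos_iff.1 (hd.trans_le hD)) hD').trans ?_⟩
  calc (‖N / D‖ * ‖D' - D‖ + ‖N' - N‖) / ‖D'‖ ≤ (M * η + η) / (d / 2) := by
        have := (norm_nonneg _).trans hM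
        gcongr
    _ = 2 * (M + 1) * η / d := by field_simp

end NormedField

section ImaginaryAxis

variable {k : ℕ} {lam : Fin k → ℂ}

lemma norm_sum_div_ofReal_mul_I_sub_le (hre : ∀ j, (lam j).re ≠ 0) (v : Fin k → ℂ) (ω : ℝ) :
    ‖∑ j, v j / ((ω : ℂ) * I - lam j)‖ ≤ ∑ j, ‖v j‖ / |(lam j).re| := by
  refine (norm_sum_le _ _).trans (Finset.sum_le_sum fun j _ ↦ ?_)
  rw [norm_div]
  exact div_le_div_of_nonneg_left (norm_nonneg _) (abs_pos.2 (hre j))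
    (abs_re_le_norm_ofReal_mul_I_sub ω _)

lemma continuous_one_add_sum_div_ofReal_mul_I_sub (hre : ∀ j, (lam j).re ≠ 0) (w : Fin k → ℂ) :
    Continuous fun ω : ℝ ↦ 1 + ∑ j, w j / ((ω : ℂ) * I - lam j) :=
  continuous_const.add <| continuous_finsetSum _ fun j _ ↦
    continuous_const.div (by fun_prop) fun ω ↦ ofReal_mul_I_sub_ne_zero ω (hre j)

lemma tendsto_one_add_sum_div_ofReal_mul_I_sub (w : Fin k → ℂ) :
    Tendsto (fun ω : ℝ ↦ 1 + ∑ j, w j / ((ω : ℂ) * I - lam j)) (cocompact ℝ) (𝓝 1) := by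
  have := tendsto_const_nhds (x := (1 : ℂ)).add <| tendsto_finsetSum Finset.univ fun j _ ↦
    (tendsto_inv₀_cobounded.comp (tendsto_ofReal_mul_I_sub_cocompact (lam j))).const_mul (w j)
  simpa [div_eq_mul_inv] using this

lemma norm_sum_secondOrder_sub_sum_le {t : ℝ} (hre : ∀ j, (lam j).re ≠ 0) (ht : 0 < t)
    {sig : Fin k → ℂ} (hsig : ∀ j, t⁻¹ ≤ |(sig j).re|) {w wh : Fin k → ℂ}
    (hwh : ∀ j, ‖wh j - w j‖ ≤ t) (c : Fin k → ℂ) (ω : ℝ) :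
    ‖∑ j, c j * (wh j * (lam j - sig j)) / (((ω : ℂ) * I - lam j) * ((ω : ℂ) * I - sig j))
        - ∑ j, c j * w j / ((ω : ℂ) * I - lam j)‖
      ≤ ∑ j, ‖c j‖ * (t / |(lam j).re| + (‖w j‖ + t) * t) := by
  rw [← Finset.sum_sub_distrib]
  refine (norm_sum_le _ _).trans (Finset.sum_le_sum fun j _ ↦ ?_)
  have hsig0 : (sig j).re ≠ 0 := abs_pos.1 ((inv_pos.2 ht).trans_le (hsig j))
  rw [mul_div_assoc (c j), mul_div_assoc (c j), ← mul_sub, norm_mul]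
  gcongr
  refine (norm_mul_sub_div_mul_sub_div_le _ _ (ofReal_mul_I_sub_ne_zero ω (hre j))
    (ofReal_mul_I_sub_ne_zero ω hsig0)).trans (add_le_add ?_ ?_)
  · exact div_le_div₀ ht.le (hwh j) (abs_pos.2 (hre j)) (abs_re_le_norm_ofReal_mul_I_sub ω _)
  · rw [div_eq_mul_inv]
    gcongr
    · linarith [norm_sub_norm_le (wh j) (w j), hwh j]
    · exact inv_le_of_inv_le₀ ht ((hsig j).trans (abs_re_le_norm_ofReal_mul_I_sub ω _))

end ImaginaryAxis

lemma tendsto_sum_norm_mul_error_bound {k : ℕ} (lam w c : Fin k → ℂ) :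
    Tendsto (fun t : ℝ ↦ ∑ j, ‖c j‖ * (t / |(lam j).re| + (‖w j‖ + t) * t)) (𝓝 0) (𝓝 0) := by
  have : Continuous fun t : ℝ ↦ ∑ j, ‖c j‖ * (t / |(lam j).re| + (‖w j‖ + t) * t) := by
    fun_prop
  simpa using this.tendsto 0

theorem stmt_8_general (k : ℕ) (lam : Fin k → ℂ)
    (hre : ∀ j, (lam j).re ≠ 0)
    (h w : Fin k → ℂ)
    (hden : ∀ ω : ℝ, 1 + ∑ j, w j / ((ω : ℂ) * I - lam j) ≠ 0) :
    ∀ ε : ℝ, 0 < ε → ∃ R : ℝ, 0 < R ∧ ∃ δ : ℝ, 0 < δ ∧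
      ∀ sig : Fin k → ℂ, (∀ j, R ≤ |(sig j).re|) → (∀ j l, sig j ≠ lam l) →
      ∀ wh : Fin k → ℂ, (∀ j, ‖wh j - w j‖ ≤ δ) →
        (∀ ω : ℝ,
          1 + ∑ j, (wh j * (lam j - sig j))
              / (((ω : ℂ) * I - lam j) * ((ω : ℂ) * I - sig j)) ≠ 0)
        ∧ (∀ ω : ℝ,
            ‖(∑ j, h j * w j / ((ω : ℂ) * I - lam j))
                / (1 + ∑ j, w j / ((ω : ℂ) * I - lam j))
              - (∑ j, h j * (wh j * (lam j - sig j))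
                  / (((ω : ℂ) * I - lam j) * ((ω : ℂ) * I - sig j)))
                / (1 + ∑ j, (wh j * (lam j - sig j))
                  / (((ω : ℂ) * I - lam j) * ((ω : ℂ) * I - sig j)))‖ ≤ ε) := by
  intro ε hε
  obtain ⟨d, hd, hdle⟩ := exists_pos_le_norm_of_tendsto_cocompact
    (continuous_one_add_sum_div_ofReal_mul_I_sub hre w) hden one_ne_zero
    (tendsto_one_add_sum_div_ofReal_mul_I_sub w)
  set M := (∑ j, ‖h j * w j‖ / |(lam j).re|) / d
  have hM : ∀ ω : ℝ, ‖(∑ j, h j * w j / ((ω : ℂ) * I - lam j))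
      / (1 + ∑ j, w j / ((ω : ℂ) * I - lam j))‖ ≤ M := fun ω ↦ by
    rw [norm_div]
    exact div_le_div₀ (by positivity)
      (norm_sum_div_ofReal_mul_I_sub_le hre (fun j ↦ h j * w j) ω) hd (hdle ω)
  set η := min (d / 2) (ε * d / (2 * (M + 1)))
  have hη : 0 < η := lt_min (by positivity) (by positivity)
  have hsmall := ((tendsto_sum_norm_mul_error_bound lam w h).eventually (gt_mem_nhds hη)).and
    ((tendsto_sum_norm_mul_error_bound lam w 1).eventually (gt_mem_nhds hη))
  obtain ⟨t, ⟨hNt, hDt⟩, ht⟩ :=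
    ((hsmall.filter_mono nhdsWithin_le_nhds).and (self_mem_nhdsWithin (s := Set.Ioi 0))).exists
  refine ⟨t⁻¹, inv_pos.2 ht, t, ht, fun sig hsig _ wh hwh ↦ ?_⟩
  have hnear (ω : ℝ) := norm_div_sub_div_le_of_near hd (hdle ω) (hM ω) (min_le_left _ _)
    ((norm_sum_secondOrder_sub_sum_le hre ht hsig hwh h ω).trans hNt.le)
    (by
      rw [add_sub_add_left_eq_sub]
      simpa only [Pi.one_apply, one_mul, norm_one]
        using (norm_sum_secondOrder_sub_sum_le hre ht hsig hwh 1 ω).trans hDt.le)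
  refine ⟨fun ω ↦ (hnear ω).1, fun ω ↦ (hnear ω).2.trans ?_⟩
  have hηε : η * (2 * (M + 1)) ≤ ε * d := (le_div_iff₀ (by positivity)).1 (min_le_right _ _)
  rw [div_le_iff₀ hd]
  linarith

/-- Uniform-on-the-imaginary-axis approximation of the unstructured
barycentric form `Ĥ` by second-order barycentric forms with weights
`ŵ_j(λ_j − σ_j)`: for every `ε > 0` there are `R, δ > 0` such that whenever all
`|Re σ_j| ≥ R` (and `σ_j ≠ λ_l`) and all `|ŵ_j − w_j| ≤ δ`, the second-order form
is defined on the whole imaginary axis and `sup_ω |Ĥ(iω) − H_SO(iω)| ≤ ε`. -/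
theorem stmt_8 (k : ℕ) (lam : Fin k → ℂ) (hlam : Function.Injective lam)
    (hre : ∀ j, (lam j).re ≠ 0)
    (h w : Fin k → ℂ)
    (hden : ∀ ω : ℝ, 1 + ∑ j, w j / ((ω : ℂ) * I - lam j) ≠ 0) :
    ∀ ε : ℝ, 0 < ε → ∃ R : ℝ, 0 < R ∧ ∃ δ : ℝ, 0 < δ ∧
      ∀ sig : Fin k → ℂ, (∀ j, R ≤ |(sig j).re|) → (∀ j l, sig j ≠ lam l) →
      ∀ wh : Fin k → ℂ, (∀ j, ‖wh j - w j‖ ≤ δ) →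
        (∀ ω : ℝ,
          1 + ∑ j, (wh j * (lam j - sig j))
              / (((ω : ℂ) * I - lam j) * ((ω : ℂ) * I - sig j)) ≠ 0)
        ∧ (∀ ω : ℝ,
            ‖(∑ j, h j * w j / ((ω : ℂ) * I - lam j))
                / (1 + ∑ j, w j / ((ω : ℂ) * I - lam j))
              - (∑ j, h j * (wh j * (lam j - sig j))
                  / (((ω : ℂ) * I - lam j) * ((ω : ℂ) * I - sig j)))
                / (1 + ∑ j, (wh j * (lam j - sig j))
                  / (((ω : ℂ) * I - lam j) * ((ω : ℂ) * I - sig j)))‖ ≤ ε) :=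
  stmt_8_general k lam hre h w hden
end

section
/- Let λ_1,…,λ_k, σ_1,…,σ_k ∈ ℂ be 2k pairwise distinct points, h_1,…,h_k, w_1,…,w_k ∈ ℂ, and let l be an index with w_l ≠ 0. With N_SO(s) = Σ_{j=1}^k h_j w_j Π_{l'≠j}(s−λ_{l'})(s−σ_{l'}) and D_SO(s) = Π_{j=1}^k(s−λ_j)(s−σ_j) + Σ_{j=1}^k w_j Π_{l'≠j}(s−λ_{l'})(s−σ_{l'}) the cleared numerator and denominator of the second-order barycentric form, one has D_SO(λ_l) ≠ 0, N_SO(λ_l) = h_l·D_SO(λ_l), D_SO(σ_l) ≠ 0, and N_SO(σ_l) = h_l·D_SO(σ_l); hence N_SO/D_SO attains the value h_l at both the support point λ_l and the quasi-support point σ_l. -/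
open Polynomial BigOperators

lemma stmt10_aux (k : ℕ) (lam sig h w : Fin k → ℂ) (l : Fin k) (hw : w l ≠ 0)
    (s : ℂ) (h0 : (s - lam l) * (s - sig l) = 0)
    (hne : ∀ m : Fin k, m ≠ l → (s - lam m) * (s - sig m) ≠ 0)
    (N D : Polynomial ℂ)
    (hN : N = ∑ j, C (h j * w j) *
          ∏ m ∈ Finset.univ.erase j, (X - C (lam m)) * (X - C (sig m)))
    (hD : D = (∏ j, (X - C (lam j)) * (X - C (sig j))) +
          ∑ j, C (w j) * ∏ m ∈ Finset.univ.erase j, (X - C (lam m)) * (X - C (sig m))) :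
    D.eval s ≠ 0 ∧ N.eval s = h l * D.eval s := by
  set P : ℂ := ∏ m ∈ Finset.univ.erase l, (s - lam m) * (s - sig m) with hP
  have hPne : P ≠ 0 := by
    rw [hP]
    exact Finset.prod_ne_zero_iff.mpr (fun m hm => hne m (Finset.ne_of_mem_erase hm))
  have hprodzero : (∏ j, (s - lam j) * (s - sig j)) = 0 :=
    Finset.prod_eq_zero (Finset.mem_univ l) h0
  have hsum : ∀ (c : Fin k → ℂ),
      (∑ j, c j * ∏ m ∈ Finset.univ.erase j, (s - lam m) * (s - sig m)) = c l * P := by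
    intro c
    rw [hP]
    refine Finset.sum_eq_single l (fun j _ hj => ?_) (by simp)
    have : (∏ m ∈ Finset.univ.erase j, (s - lam m) * (s - sig m)) = 0 :=
      Finset.prod_eq_zero (Finset.mem_erase.mpr ⟨Ne.symm hj, Finset.mem_univ l⟩) h0
    rw [this, mul_zero]
  have hDe : D.eval s = w l * P := by
    simp only [hD, eval_add, eval_prod, eval_finset_sum, eval_mul, eval_sub, eval_X, eval_C,
      eval_prod]
    rw [hprodzero, hsum]
    ring
  have hNe : N.eval s = h l * w l * P := by
    simp only [hN, eval_finset_sum, eval_mul, eval_sub, eval_X, eval_C, eval_prod]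
    rw [hsum (fun j => h j * w j)]
  refine ⟨by rw [hDe]; exact mul_ne_zero hw hPne, by rw [hNe, hDe]; ring⟩

/-- Interpolation property of the second-order barycentric form: if
`w_l ≠ 0`, then the cleared denominator `D_SO` is nonzero at both the support point
`λ_l` and quasi-support point `σ_l`, and the cleared numerator satisfies
`N_SO(λ_l) = h_l · D_SO(λ_l)` and `N_SO(σ_l) = h_l · D_SO(σ_l)`, so `N_SO/D_SO`
attains the value `h_l` at both points. -/
theorem stmt_10 (k : ℕ) (lam sig h w : Fin k → ℂ)
    (hlam : Function.Injective lam) (hsig : Function.Injective sig)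
    (hls : ∀ i j, lam i ≠ sig j)
    (l : Fin k) (hw : w l ≠ 0)
    (N D : Polynomial ℂ)
    (hN : N = ∑ j, C (h j * w j) *
          ∏ m ∈ Finset.univ.erase j, (X - C (lam m)) * (X - C (sig m)))
    (hD : D = (∏ j, (X - C (lam j)) * (X - C (sig j))) +
          ∑ j, C (w j) * ∏ m ∈ Finset.univ.erase j, (X - C (lam m)) * (X - C (sig m))) :
    D.eval (lam l) ≠ 0 ∧ N.eval (lam l) = h l * D.eval (lam l)
    ∧ D.eval (sig l) ≠ 0 ∧ N.eval (sig l) = h l * D.eval (sig l) := by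
  have H1 := stmt10_aux k lam sig h w l hw (lam l) (by simp)
    (fun m hm => mul_ne_zero (sub_ne_zero.mpr (fun e => hm (hlam e.symm)))
      (sub_ne_zero.mpr (hls l m))) N D hN hD
  have H2 := stmt10_aux k lam sig h w l hw (sig l) (by simp)
    (fun m hm => mul_ne_zero (sub_ne_zero.mpr (fun e => (hls m l) e.symm))
      (sub_ne_zero.mpr (fun e => hm (hsig e.symm)))) N D hN hD
  exact ⟨H1.1, H1.2, H2.1, H2.2⟩
end

section
/- Let λ_1,…,λ_k ∈ ℂ be pairwise distinct and w, h ∈ ℂ^k. Set Λ = diag(λ_1,…,λ_k), A = Λ − w·𝟙^T ∈ ℂ^{k×k} (where 𝟙 ∈ ℂ^k is the all-ones vector), b = w and c = h. Then for every s ∈ ℂ with s ∉ {λ_1,…,λ_k} and d(s) := 1 + Σ_{j=1}^k w_j/(s−λ_j) ≠ 0, the matrix sI_k − A is invertible and c^T (sI_k − A)^{-1} b = (Σ_{j=1}^k h_j w_j/(s−λ_j)) / d(s). -/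
/-!
Write `sI - A = D + w 𝟙ᵀ` with `D = diag(s - λⱼ)`, a rank-one perturbation of an invertible
diagonal matrix. The matrix determinant lemma gives `det(sI - A) = ∏ⱼ (s - λⱼ) · d(s)`, and
Sherman–Morrison gives `(D + w 𝟙ᵀ)⁻¹ w = D⁻¹ w / d(s)`, whose pairing with `h` is the
barycentric quotient.
-/

namespace Matrix

variable {ι K : Type*} [Fintype ι] [DecidableEq ι] [Field K]

theorem det_diagonal_add_vecMulVec {e : ι → K} (he : ∀ i, e i ≠ 0) (u v : ι → K) :
    (diagonal e + vecMulVec u v).det = (∏ i, e i) * (1 + ∑ i, v i * u i / e i) := by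
  have hdet : IsUnit (diagonal e).det := by
    rw [det_diagonal]
    exact (Finset.prod_ne_zero_iff.mpr fun i _ => he i).isUnit
  have hinv : (diagonal e)⁻¹ = diagonal e⁻¹ := by
    refine inv_eq_right_inv ?_
    rw [diagonal_mul_diagonal, ← diagonal_one]
    exact congrArg diagonal (funext fun i => mul_inv_cancel₀ (he i))
  rw [vecMulVec_eq Unit, det_add_replicateCol_mul_replicateRow hdet, det_diagonal, det_unique, hinv]
  congr 2
  simp [mul_apply, diagonal_apply, div_eq_mul_inv, mul_comm, mul_assoc]

theorem diagonal_add_vecMulVec_mulVec {R : Type*} [CommSemiring R] (e u v x : ι → R) :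
    (diagonal e + vecMulVec u v) *ᵥ x = fun i => e i * x i + u i * (v ⬝ᵥ x) := by
  ext i
  simp [add_mulVec, vecMulVec_mulVec, mulVec_diagonal, mul_comm]

theorem isUnit_diagonal_add_vecMulVec {e : ι → K} (he : ∀ i, e i ≠ 0) (u v : ι → K)
    (hd : 1 + ∑ i, v i * u i / e i ≠ 0) : IsUnit (diagonal e + vecMulVec u v) := by
  rw [isUnit_iff_isUnit_det, det_diagonal_add_vecMulVec he]
  exact (mul_ne_zero (Finset.prod_ne_zero_iff.mpr fun i _ => he i) hd).isUnit

theorem inv_diagonal_add_vecMulVec_mulVec {e : ι → K} (he : ∀ i, e i ≠ 0) (u v : ι → K)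
    (hd : 1 + ∑ i, v i * u i / e i ≠ 0) :
    (diagonal e + vecMulVec u v)⁻¹ *ᵥ u =
      fun i => u i / (e i * (1 + ∑ j, v j * u j / e j)) := by
  set d := 1 + ∑ j, v j * u j / e j with hd_def
  have hv : v ⬝ᵥ (fun i => u i / (e i * d)) = (d - 1) / d := by
    simp only [dotProduct, hd_def, add_sub_cancel_left, Finset.sum_div]
    refine Finset.sum_congr rfl fun i _ => ?_
    field_simp
  have hsol : (diagonal e + vecMulVec u v) *ᵥ (fun i => u i / (e i * d)) = u := by
    rw [diagonal_add_vecMulVec_mulVec, hv]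
    ext i
    field_simp [he i]
    ring
  have := (isUnit_diagonal_add_vecMulVec he u v hd).invertible
  exact inv_mulVec_eq_vec hsol.symm

end Matrix

open Matrix

theorem stmt_11_general (k : ℕ) (lam : Fin k → ℂ)
    (w h : Fin k → ℂ)
    (A : Matrix (Fin k) (Fin k) ℂ)
    (hA : A = Matrix.diagonal lam - Matrix.of (fun i _ => w i))
    (s : ℂ) (hs : ∀ j, s ≠ lam j)
    (hd : 1 + ∑ j, w j / (s - lam j) ≠ 0) :
    IsUnit (s • (1 : Matrix (Fin k) (Fin k) ℂ) - A)
    ∧ dotProduct h ((s • (1 : Matrix (Fin k) (Fin k) ℂ) - A)⁻¹.mulVec w)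
        = (∑ j, h j * w j / (s - lam j)) / (1 + ∑ j, w j / (s - lam j)) := by
  have he : ∀ j, s - lam j ≠ 0 := fun j => sub_ne_zero.mpr (hs j)
  have hM : s • 1 - A = diagonal (fun j => s - lam j) + vecMulVec w 1 := by
    subst hA
    ext i j
    rcases eq_or_ne i j with rfl | hij
    · simp only [Matrix.sub_apply, Matrix.smul_apply, one_apply_eq, smul_eq_mul, mul_one,
        diagonal_apply_eq, of_apply, vecMulVec_one, Matrix.add_apply, replicateCol_apply]
      ring
    · simp [hij]
  have hd' : 1 + ∑ j, (1 : Fin k → ℂ) j * w j / (s - lam j) ≠ 0 := by simpa using hd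
  rw [hM, inv_diagonal_add_vecMulVec_mulVec he w 1 hd']
  refine ⟨isUnit_diagonal_add_vecMulVec he w 1 hd', ?_⟩
  simp only [Pi.one_apply, one_mul, dotProduct, Finset.sum_div]
  exact Finset.sum_congr rfl fun j _ => by rw [div_div, mul_div_assoc]

/-- State-space realization of the unstructured barycentric form:
with `A = Λ − w𝟙ᵀ`, `b = w`, `c = h`, for each `s` outside the support points with
nonvanishing barycentric denominator `d(s)`, the matrix `sI − A` is invertible and
`cᵀ(sI − A)⁻¹ b = (Σ_j h_j w_j/(s−λ_j)) / d(s)`. -/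
theorem stmt_11 (k : ℕ) (lam : Fin k → ℂ) (hlam : Function.Injective lam)
    (w h : Fin k → ℂ)
    (A : Matrix (Fin k) (Fin k) ℂ)
    (hA : A = Matrix.diagonal lam - Matrix.of (fun i _ => w i))
    (s : ℂ) (hs : ∀ j, s ≠ lam j)
    (hd : 1 + ∑ j, w j / (s - lam j) ≠ 0) :
    IsUnit (s • (1 : Matrix (Fin k) (Fin k) ℂ) - A)
    ∧ dotProduct h ((s • (1 : Matrix (Fin k) (Fin k) ℂ) - A)⁻¹.mulVec w)
        = (∑ j, h j * w j / (s - lam j)) / (1 + ∑ j, w j / (s - lam j)) :=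
  stmt_11_general k lam w h A hA s hs hd
end

section
/- Let k = 2m and suppose the second-order barycentric parameters come in conjugate pairs with matching conjugacy pattern: λ_{m+j} = conj(λ_j), σ_{m+j} = conj(σ_j), h_{m+j} = conj(h_j) and w_{m+j} = conj(w_j) for j = 1,…,m, with the 2k points λ_1,…,λ_k, σ_1,…,σ_k pairwise distinct. Then the cleared numerator N_SO and denominator D_SO of the second-order barycentric form are polynomials with real coefficients, and for every s ∈ ℂ with s ∉ {λ_j} ∪ {σ_j} and 1 + Σ_{j=1}^k w_j/((s−λ_j)(s−σ_j)) ≠ 0, also the denominator at conj(s) is nonzero and H_SO(conj(s)) = conj(H_SO(s)); in particular H_SO(x) ∈ ℝ for every x ∈ ℝ at which H_SO is defined. -/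
open Polynomial BigOperators

/-- The swap of the two halves of `Fin (m + m)`. -/
def sw (m : ℕ) : Fin (m + m) ≃ Fin (m + m) :=
  finSumFinEquiv.symm.trans ((Equiv.sumComm (Fin m) (Fin m)).trans finSumFinEquiv)

lemma sw_conj {m : ℕ} (f : Fin (m + m) → ℂ)
    (hf : ∀ j : Fin m, f (Fin.natAdd m j) = starRingEnd ℂ (f (Fin.castAdd m j))) :
    ∀ j, starRingEnd ℂ (f j) = f (sw m j) := by
  intro j
  obtain ⟨x, rfl⟩ := finSumFinEquiv.surjective j
  cases x with
  | inl a =>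
    have : sw m (finSumFinEquiv (Sum.inl a)) = finSumFinEquiv (Sum.inr a) := by
      rw [sw, Equiv.trans_apply, Equiv.trans_apply, Equiv.symm_apply_apply]; rfl
    rw [this, finSumFinEquiv_apply_left, finSumFinEquiv_apply_right, hf a]
  | inr a =>
    have : sw m (finSumFinEquiv (Sum.inr a)) = finSumFinEquiv (Sum.inl a) := by
      rw [sw, Equiv.trans_apply, Equiv.trans_apply, Equiv.symm_apply_apply]; rfl
    rw [this, finSumFinEquiv_apply_left, finSumFinEquiv_apply_right, hf a,
      Complex.conj_conj]

/-- If the second-order barycentric parameters come in conjugate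
pairs with matching conjugacy pattern (`k = 2m`, `λ_{m+j} = conj λ_j`,
`σ_{m+j} = conj σ_j`, `h_{m+j} = conj h_j`, `w_{m+j} = conj w_j`), then the cleared
numerator `N_SO` and denominator `D_SO` have real coefficients, and
`H_SO(conj s) = conj (H_SO s)` wherever `H_SO` is defined; in particular
`H_SO(x) ∈ ℝ` for real `x` at which `H_SO` is defined. -/
theorem stmt_14 (m : ℕ) (lam sig h w : Fin (m + m) → ℂ)
    (hlam : Function.Injective lam) (hsig : Function.Injective sig)
    (hls : ∀ i j, lam i ≠ sig j)
    (hcl : ∀ j : Fin m, lam (Fin.natAdd m j) = starRingEnd ℂ (lam (Fin.castAdd m j)))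
    (hcs : ∀ j : Fin m, sig (Fin.natAdd m j) = starRingEnd ℂ (sig (Fin.castAdd m j)))
    (hch : ∀ j : Fin m, h (Fin.natAdd m j) = starRingEnd ℂ (h (Fin.castAdd m j)))
    (hcw : ∀ j : Fin m, w (Fin.natAdd m j) = starRingEnd ℂ (w (Fin.castAdd m j)))
    (N D : Polynomial ℂ)
    (hN : N = ∑ j, C (h j * w j) *
          ∏ l ∈ Finset.univ.erase j, (X - C (lam l)) * (X - C (sig l)))
    (hD : D = (∏ j, (X - C (lam j)) * (X - C (sig j))) +
          ∑ j, C (w j) * ∏ l ∈ Finset.univ.erase j, (X - C (lam l)) * (X - C (sig l))) :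
    (∀ i, (N.coeff i).im = 0) ∧ (∀ i, (D.coeff i).im = 0)
    ∧ (∀ s : ℂ, (∀ j, s ≠ lam j) → (∀ j, s ≠ sig j) →
        1 + ∑ j, w j / ((s - lam j) * (s - sig j)) ≠ 0 →
        (1 + ∑ j, w j / ((starRingEnd ℂ s - lam j) * (starRingEnd ℂ s - sig j)) ≠ 0
        ∧ (∑ j, h j * w j / ((starRingEnd ℂ s - lam j) * (starRingEnd ℂ s - sig j)))
            / (1 + ∑ j, w j / ((starRingEnd ℂ s - lam j) * (starRingEnd ℂ s - sig j)))
          = starRingEnd ℂ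
              ((∑ j, h j * w j / ((s - lam j) * (s - sig j)))
                / (1 + ∑ j, w j / ((s - lam j) * (s - sig j))))))
    ∧ (∀ x : ℝ, (∀ j, (x : ℂ) ≠ lam j) → (∀ j, (x : ℂ) ≠ sig j) →
        1 + ∑ j, w j / (((x : ℂ) - lam j) * ((x : ℂ) - sig j)) ≠ 0 →
        ((∑ j, h j * w j / (((x : ℂ) - lam j) * ((x : ℂ) - sig j)))
          / (1 + ∑ j, w j / (((x : ℂ) - lam j) * ((x : ℂ) - sig j)))).im = 0) := by
  have hlam' := sw_conj lam hcl
  have hsig' := sw_conj sig hcs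
  have hh' := sw_conj h hch
  have hw' := sw_conj w hcw
  set e := sw m with he
  -- reindexing of products over `erase`
  have hprod : ∀ j : Fin (m + m),
      (∏ l ∈ Finset.univ.erase j,
        (X - C (lam (e l))) * (X - C (sig (e l))))
      = ∏ l ∈ Finset.univ.erase (e j), (X - C (lam l)) * (X - C (sig l)) := by
    intro j
    refine Finset.prod_equiv e (fun i => ?_) (fun i _ => rfl)
    simp [Finset.mem_erase, EmbeddingLike.apply_eq_iff_eq]
  have mapfac : ∀ (t : Finset (Fin (m + m))),
      (∏ l ∈ t, (X - C (lam l)) * (X - C (sig l))).map (starRingEnd ℂ)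
      = ∏ l ∈ t, (X - C (lam (e l))) * (X - C (sig (e l))) := by
    intro t
    rw [Polynomial.map_prod]
    refine Finset.prod_congr rfl fun l _ => ?_
    rw [Polynomial.map_mul, Polynomial.map_sub, Polynomial.map_sub, map_C, map_C,
      Polynomial.map_X, hlam' l, hsig' l]
  -- N has real coefficients
  have hNmap : N.map (starRingEnd ℂ) = N := by
    rw [hN, Polynomial.map_sum]
    have step : ∀ j : Fin (m + m),
        (C (h j * w j) *
          ∏ l ∈ Finset.univ.erase j, (X - C (lam l)) * (X - C (sig l))).map (starRingEnd ℂ)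
        = C (h (e j) * w (e j)) *
          ∏ l ∈ Finset.univ.erase (e j), (X - C (lam l)) * (X - C (sig l)) := by
      intro j
      rw [Polynomial.map_mul, map_C, map_mul, hh' j, hw' j, mapfac, hprod j]
    rw [Finset.sum_congr rfl fun j _ => step j]
    exact Fintype.sum_equiv e _ _ (fun j => rfl)
  have hDmap : D.map (starRingEnd ℂ) = D := by
    rw [hD, Polynomial.map_add, Polynomial.map_sum]
    have step : ∀ j : Fin (m + m),
        (C (w j) *
          ∏ l ∈ Finset.univ.erase j, (X - C (lam l)) * (X - C (sig l))).map (starRingEnd ℂ)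
        = C (w (e j)) *
          ∏ l ∈ Finset.univ.erase (e j), (X - C (lam l)) * (X - C (sig l)) := by
      intro j
      rw [Polynomial.map_mul, map_C, hw' j, mapfac, hprod j]
    rw [Finset.sum_congr rfl fun j _ => step j, mapfac]
    congr 1
    · exact Fintype.prod_equiv e _ _ (fun j => rfl)
    · exact Fintype.sum_equiv e _ _ (fun j => rfl)
  have realN : ∀ i, (N.coeff i).im = 0 := by
    intro i
    have := congrArg (fun p => Polynomial.coeff p i) hNmap
    simp only [Polynomial.coeff_map] at this
    exact Complex.conj_eq_iff_im.mp this
  have realD : ∀ i, (D.coeff i).im = 0 := by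
    intro i
    have := congrArg (fun p => Polynomial.coeff p i) hDmap
    simp only [Polynomial.coeff_map] at this
    exact Complex.conj_eq_iff_im.mp this
  -- conjugation of the rational sums
  have hSum : ∀ (a : Fin (m + m) → ℂ), (∀ j, starRingEnd ℂ (a j) = a (e j)) →
      ∀ s : ℂ,
      (∑ j, a j / ((starRingEnd ℂ s - lam j) * (starRingEnd ℂ s - sig j)))
        = starRingEnd ℂ (∑ j, a j / ((s - lam j) * (s - sig j))) := by
    intro a ha s
    rw [map_sum]
    refine (Fintype.sum_equiv e _ _ (fun j => ?_)).symm
    rw [map_div₀, map_mul, map_sub, map_sub, ha j, hlam' j, hsig' j]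
  have main : ∀ s : ℂ,
      1 + ∑ j, w j / ((s - lam j) * (s - sig j)) ≠ 0 →
      (1 + ∑ j, w j / ((starRingEnd ℂ s - lam j) * (starRingEnd ℂ s - sig j)) ≠ 0
      ∧ (∑ j, h j * w j / ((starRingEnd ℂ s - lam j) * (starRingEnd ℂ s - sig j)))
          / (1 + ∑ j, w j / ((starRingEnd ℂ s - lam j) * (starRingEnd ℂ s - sig j)))
        = starRingEnd ℂ
            ((∑ j, h j * w j / ((s - lam j) * (s - sig j)))
              / (1 + ∑ j, w j / ((s - lam j) * (s - sig j))))) := by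
    intro s hden
    have hw2 : ∀ j : Fin (m + m), starRingEnd ℂ (w j) = w (e j) := hw'
    have hhw : ∀ j : Fin (m + m), starRingEnd ℂ (h j * w j) = h (e j) * w (e j) := by
      intro j; rw [map_mul, hh' j, hw' j]
    have hDen : 1 + ∑ j, w j / ((starRingEnd ℂ s - lam j) * (starRingEnd ℂ s - sig j))
        = starRingEnd ℂ (1 + ∑ j, w j / ((s - lam j) * (s - sig j))) := by
      rw [map_add, map_one, hSum w hw2 s]
    have hNum : (∑ j, h j * w j / ((starRingEnd ℂ s - lam j) * (starRingEnd ℂ s - sig j)))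
        = starRingEnd ℂ (∑ j, h j * w j / ((s - lam j) * (s - sig j))) :=
      hSum (fun j => h j * w j) hhw s
    constructor
    · rw [hDen]
      exact fun h0 => hden (by simpa using congrArg (starRingEnd ℂ) h0)
    · rw [hDen, hNum, map_div₀]
  refine ⟨realN, realD, fun s _ _ hden => main s hden, ?_⟩
  intro x hx1 hx2 hden
  have := (main (x : ℂ) hden).2
  rw [Complex.conj_ofReal] at this
  exact Complex.conj_eq_iff_im.mp this.symm
end

section
/- Let m ∈ ℕ and λ_j, h_j, w_j ∈ ℂ for j = 1,…,m, such that the 2m points λ_1,…,λ_m, conj(λ_1),…,conj(λ_m) are pairwise distinct. Define the real block-diagonal matrix Ã ∈ ℝ^{2m×2m} with j-th 2×2 diagonal block [[Re λ_j, Im λ_j],[−Im λ_j, Re λ_j]], and real vectors c̃ = (Re h_1, Im h_1, …, Re h_m, Im h_m)^T, b̃ = (Re w_1, −Im w_1, …, Re w_m, −Im w_m)^T, z̃ = (2, 0, 2, 0, …, 2, 0)^T ∈ ℝ^{2m}. Set E = I_{2m}, A = Ã − b̃ z̃^T, b = √2·b̃, c = √2·c̃. Then for every s ∈ ℂ with s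 ∉ {λ_j, conj(λ_j)} and d(s) := 1 + Σ_{j=1}^m (w_j/(s−λ_j) + conj(w_j)/(s−conj(λ_j))) ≠ 0, the matrix sE − A is invertible and c^T (sE − A)^{-1} b = (Σ_{j=1}^m (h_j w_j/(s−λ_j) + conj(h_j)·conj(w_j)/(s−conj(λ_j)))) / d(s). -/
/-! The real realization is a real form of the complex diagonal one. In the coordinates
`x ↦ (x₀ - i x₁, x₀ + i x₁)` the block `[[Re λ, Im λ], [-Im λ, Re λ]]` acts as `diag(λ, conj λ)`,
so `sI - Ã` has determinant `∏ (s - λⱼ)(s - conj λⱼ)` and `y = (sI - Ã)⁻¹ b̃` is explicit.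
Since `sI - A = (sI - Ã) + b̃ z̃ᵀ` is a rank-one update, Sherman–Morrison gives
`c̃ᵀ(sI - A)⁻¹ b̃ = c̃ᵀy / (1 + z̃ᵀy)`, and the two inner products, computed block by block, are
(half) the numerator and the denominator of the barycentric form. -/

open Matrix Complex ComplexConjugate

section RankOne

variable {n K : Type*} [Fintype n] [DecidableEq n] [Field K]
  {M : Matrix n n K} {u v y : n → K}

theorem isUnit_add_vecMulVec (hM : IsUnit M) (hy : M *ᵥ y = u) (hd : 1 + v ⬝ᵥ y ≠ 0) :
    IsUnit (M + vecMulVec u v) := by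
  rw [← mulVec_injective_iff_isUnit, ← coe_mulVecLin, injective_iff_map_eq_zero]
  intro x hx
  rw [mulVecLin_apply, add_mulVec, vecMulVec_mulVec, op_smul_eq_smul, ← hy] at hx
  have hMx : M *ᵥ x = M *ᵥ (-(v ⬝ᵥ x) • y) := by
    rw [mulVec_smul, neg_smul, eq_neg_iff_add_eq_zero, hx]
  have hx' : x = -(v ⬝ᵥ x) • y := mulVec_injective_iff_isUnit.mpr hM hMx
  have hvx : v ⬝ᵥ x * (1 + v ⬝ᵥ y) = 0 := by
    have := congrArg (v ⬝ᵥ ·) hx'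
    simp only [dotProduct_smul, smul_eq_mul] at this
    linear_combination this
  rw [hx', (mul_eq_zero.mp hvx).resolve_right hd, neg_zero, zero_smul]

theorem inv_add_vecMulVec_mulVec (hM : IsUnit M) (hy : M *ᵥ y = u) (hd : 1 + v ⬝ᵥ y ≠ 0) :
    (M + vecMulVec u v)⁻¹ *ᵥ u = (1 + v ⬝ᵥ y)⁻¹ • y := by
  have hN := (isUnit_iff_isUnit_det _).mp (isUnit_add_vecMulVec hM hy hd)
  have hNy : (M + vecMulVec u v) *ᵥ ((1 + v ⬝ᵥ y)⁻¹ • y) = u := by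
    rw [mulVec_smul, add_mulVec, vecMulVec_mulVec, hy, op_smul_eq_smul,
      show u + (v ⬝ᵥ y) • u = (1 + v ⬝ᵥ y) • u by rw [add_smul, one_smul], smul_smul,
      inv_mul_cancel₀ hd, one_smul]
  calc (M + vecMulVec u v)⁻¹ *ᵥ u
      = (M + vecMulVec u v)⁻¹ *ᵥ ((M + vecMulVec u v) *ᵥ ((1 + v ⬝ᵥ y)⁻¹ • y)) :=
        congrArg _ hNy.symm
    _ = (1 + v ⬝ᵥ y)⁻¹ • y := by rw [mulVec_mulVec, nonsing_inv_mul _ hN, one_mulVec]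

theorem dotProduct_inv_add_vecMulVec_mulVec (hM : IsUnit M) (hy : M *ᵥ y = u)
    (hd : 1 + v ⬝ᵥ y ≠ 0) (c : n → K) :
    c ⬝ᵥ (M + vecMulVec u v)⁻¹ *ᵥ u = c ⬝ᵥ y / (1 + v ⬝ᵥ y) := by
  rw [inv_add_vecMulVec_mulVec hM hy hd, dotProduct_smul, smul_eq_mul, inv_mul_eq_div]

end RankOne

section BlockDiagonal

variable {ι n α : Type*} [Fintype ι] [DecidableEq ι] [Fintype n]

theorem det_blockDiagonal_submatrix_swap [DecidableEq n] [CommRing α] (F : ι → Matrix n n α) :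
    ((blockDiagonal F).submatrix Prod.swap Prod.swap).det = ∏ i, (F i).det :=
  (det_submatrix_equiv_self (Equiv.prodComm ι n) _).trans (det_blockDiagonal F)

theorem blockDiagonal_submatrix_swap_mulVec [NonUnitalNonAssocSemiring α]
    (F : ι → Matrix n n α) (x : ι × n → α) (p : ι × n) :
    ((blockDiagonal F).submatrix Prod.swap Prod.swap *ᵥ x) p =
      (F p.1 *ᵥ fun k => x (p.1, k)) p.2 := by
  obtain ⟨i, a⟩ := p
  simp [mulVec, dotProduct, Fintype.sum_prod_type, blockDiagonal_apply', ite_mul]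

end BlockDiagonal

def realBlock (μ : ℂ) : Matrix (Fin 2) (Fin 2) ℂ := !![(μ.re : ℂ), μ.im; -μ.im, μ.re]

-- The vector `x` with `x₀ - i x₁ = z` and `x₀ + i x₁ = z'`.
noncomputable def realCoords (z z' : ℂ) : Fin 2 → ℂ := ![(z + z') / 2, I * (z - z') / 2]

theorem det_smul_one_sub_realBlock (s μ : ℂ) :
    (s • 1 - realBlock μ).det = (s - μ) * (s - conj μ) := by
  obtain ⟨a, b, rfl⟩ : ∃ a b : ℝ, μ = a + b * I := ⟨μ.re, μ.im, (re_add_im μ).symm⟩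
  simp [det_fin_two, realBlock]
  linear_combination (b : ℂ) ^ 2 * I_sq

theorem smul_one_sub_realBlock_mulVec_realCoords (s μ z z' : ℂ) :
    (s • 1 - realBlock μ) *ᵥ realCoords z z' =
      realCoords ((s - μ) * z) ((s - conj μ) * z') := by
  obtain ⟨a, b, rfl⟩ : ∃ a b : ℝ, μ = a + b * I := ⟨μ.re, μ.im, (re_add_im μ).symm⟩
  ext i
  fin_cases i <;> simp [realBlock, realCoords, mulVec, dotProduct, Fin.sum_univ_two]
  · ring
  · linear_combination ((b : ℂ) * (z + z') / 2) * I_sq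

theorem realCoords_dotProduct_realCoords (a a' z z' : ℂ) :
    realCoords a a' ⬝ᵥ realCoords z z' = (a' * z + a * z') / 2 := by
  simp [realCoords, dotProduct, Fin.sum_univ_two]
  linear_combination ((a - a') * (z - z') / 4) * I_sq

theorem realCoords_conj_self (h : ℂ) : realCoords (conj h) h = ![(h.re : ℂ), h.im] := by
  obtain ⟨a, b, rfl⟩ : ∃ a b : ℝ, h = a + b * I := ⟨h.re, h.im, (re_add_im h).symm⟩
  ext i
  fin_cases i <;> simp [realCoords]
  · ring
  · linear_combination (-(b : ℂ)) * I_sq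

theorem realCoords_self_conj (w : ℂ) : realCoords w (conj w) = ![(w.re : ℂ), -w.im] := by
  simpa using realCoords_conj_self (conj w)

section Blockwise

variable {ι : Type*}

noncomputable def blockRealCoords (z z' : ι → ℂ) : ι × Fin 2 → ℂ :=
  fun p => realCoords (z p.1) (z' p.1) p.2

theorem blockRealCoords_conj_self (h : ι → ℂ) :
    blockRealCoords (fun i => conj (h i)) h =
      fun p => if p.2 = 0 then ((h p.1).re : ℂ) else ((h p.1).im : ℂ) := by
  ext ⟨i, a⟩
  fin_cases a <;> simp [blockRealCoords, realCoords_conj_self]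

theorem blockRealCoords_self_conj (w : ι → ℂ) :
    blockRealCoords w (fun i => conj (w i)) =
      fun p => if p.2 = 0 then ((w p.1).re : ℂ) else (-(w p.1).im : ℂ) := by
  ext ⟨i, a⟩
  fin_cases a <;> simp [blockRealCoords, realCoords_self_conj]

theorem blockRealCoords_dotProduct_blockRealCoords [Fintype ι] (a a' z z' : ι → ℂ) :
    blockRealCoords a a' ⬝ᵥ blockRealCoords z z' = ∑ i, (a' i * z i + a i * z' i) / 2 := by
  rw [dotProduct, Fintype.sum_prod_type]
  refine Finset.sum_congr rfl fun i _ => ?_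
  rw [← realCoords_dotProduct_realCoords]
  rfl

variable [DecidableEq ι]

-- Indexed by `(block, position)`, the transpose of the convention of `blockDiagonal`.
def realBlockDiagonal (μ : ι → ℂ) : Matrix (ι × Fin 2) (ι × Fin 2) ℂ :=
  (blockDiagonal fun i => realBlock (μ i)).submatrix Prod.swap Prod.swap

theorem realBlockDiagonal_eq (μ : ι → ℂ) :
    realBlockDiagonal μ = Matrix.of fun p q =>
      if p.1 = q.1 then
        (if p.2 = 0 then
          (if q.2 = 0 then ((μ p.1).re : ℂ) else ((μ p.1).im : ℂ))
        else
          (if q.2 = 0 then (-(μ p.1).im : ℂ) else ((μ p.1).re : ℂ)))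
      else 0 := by
  ext ⟨i, a⟩ ⟨j, a'⟩
  by_cases hij : i = j
  · subst hij
    fin_cases a <;> fin_cases a' <;> simp [realBlockDiagonal, realBlock]
  · simp [realBlockDiagonal, blockDiagonal_apply', hij]

theorem smul_one_sub_realBlockDiagonal (s : ℂ) (μ : ι → ℂ) :
    s • 1 - realBlockDiagonal μ =
      (blockDiagonal fun i => s • 1 - realBlock (μ i)).submatrix Prod.swap Prod.swap := by
  ext ⟨i, a⟩ ⟨j, a'⟩
  by_cases hij : i = j
  · subst hij
    simp [realBlockDiagonal, one_apply]
  · simp [realBlockDiagonal, blockDiagonal_apply', one_apply, hij]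

variable [Fintype ι]

theorem isUnit_smul_one_sub_realBlockDiagonal {s : ℂ} {μ : ι → ℂ} (hs : ∀ i, s ≠ μ i)
    (hs' : ∀ i, s ≠ conj (μ i)) : IsUnit (s • 1 - realBlockDiagonal μ) := by
  simp [smul_one_sub_realBlockDiagonal, isUnit_iff_isUnit_det, det_blockDiagonal_submatrix_swap,
    det_smul_one_sub_realBlock, Finset.prod_ne_zero_iff, sub_eq_zero, hs, hs']

theorem smul_one_sub_realBlockDiagonal_mulVec (s : ℂ) (μ z z' : ι → ℂ) :
    (s • 1 - realBlockDiagonal μ) *ᵥ blockRealCoords z z' =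
      blockRealCoords (fun i => (s - μ i) * z i) (fun i => (s - conj (μ i)) * z' i) := by
  ext p
  simp only [smul_one_sub_realBlockDiagonal, blockDiagonal_submatrix_swap_mulVec,
    blockRealCoords, smul_one_sub_realBlock_mulVec_realCoords]

end Blockwise

theorem stmt_15_general (m : ℕ) (lam h w : Fin m → ℂ)
    (At : Matrix (Fin m × Fin 2) (Fin m × Fin 2) ℂ)
    (hAt : At = Matrix.of fun p q =>
      if p.1 = q.1 then
        (if p.2 = 0 then
          (if q.2 = 0 then ((lam p.1).re : ℂ) else ((lam p.1).im : ℂ))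
        else
          (if q.2 = 0 then (-(lam p.1).im : ℂ) else ((lam p.1).re : ℂ)))
      else 0)
    (ct bt zt : Fin m × Fin 2 → ℂ)
    (hct : ct = fun p => if p.2 = 0 then ((h p.1).re : ℂ) else ((h p.1).im : ℂ))
    (hbt : bt = fun p => if p.2 = 0 then ((w p.1).re : ℂ) else (-(w p.1).im : ℂ))
    (hzt : zt = fun p => if p.2 = 0 then (2 : ℂ) else 0)
    (A : Matrix (Fin m × Fin 2) (Fin m × Fin 2) ℂ)
    (hA : A = At - Matrix.of (fun p q => bt p * zt q))
    (b c : Fin m × Fin 2 → ℂ)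
    (hb : b = fun p => (Real.sqrt 2 : ℂ) * bt p)
    (hc : c = fun p => (Real.sqrt 2 : ℂ) * ct p)
    (s : ℂ) (hs1 : ∀ j, s ≠ lam j) (hs2 : ∀ j, s ≠ starRingEnd ℂ (lam j))
    (hd : 1 + ∑ j, (w j / (s - lam j)
          + starRingEnd ℂ (w j) / (s - starRingEnd ℂ (lam j))) ≠ 0) :
    IsUnit (s • (1 : Matrix (Fin m × Fin 2) (Fin m × Fin 2) ℂ) - A)
    ∧ dotProduct c
        ((s • (1 : Matrix (Fin m × Fin 2) (Fin m × Fin 2) ℂ) - A)⁻¹.mulVec b)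
      = (∑ j, (h j * w j / (s - lam j)
          + starRingEnd ℂ (h j) * starRingEnd ℂ (w j) / (s - starRingEnd ℂ (lam j))))
        / (1 + ∑ j, (w j / (s - lam j)
          + starRingEnd ℂ (w j) / (s - starRingEnd ℂ (lam j)))) := by
  have hzt' : zt = blockRealCoords (fun _ => 2) (fun _ => 2) := by
    subst hzt; ext ⟨j, a⟩; fin_cases a <;> simp [blockRealCoords, realCoords]
  rw [← realBlockDiagonal_eq] at hAt
  rw [← blockRealCoords_conj_self] at hct
  rw [← blockRealCoords_self_conj] at hbt
  set y := blockRealCoords (fun j => w j / (s - lam j)) (fun j => conj (w j) / (s - conj (lam j)))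
  have hMy : (s • 1 - At) *ᵥ y = bt := by
    simp only [hAt, hbt, y, smul_one_sub_realBlockDiagonal_mulVec,
      mul_div_cancel₀ _ (sub_ne_zero.mpr (hs1 _)), mul_div_cancel₀ _ (sub_ne_zero.mpr (hs2 _))]
  have hzy : zt ⬝ᵥ y = ∑ j, (w j / (s - lam j) + conj (w j) / (s - conj (lam j))) := by
    simp only [hzt', y, blockRealCoords_dotProduct_blockRealCoords]
    exact Finset.sum_congr rfl fun j _ => by ring
  have hcy : 2 * ct ⬝ᵥ y = ∑ j, (h j * w j / (s - lam j)
      + conj (h j) * conj (w j) / (s - conj (lam j))) := by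
    simp only [hct, y, blockRealCoords_dotProduct_blockRealCoords, Finset.mul_sum]
    exact Finset.sum_congr rfl fun j _ => by ring
  have hsplit : s • 1 - A = (s • 1 - At) + vecMulVec bt zt := by
    rw [hA, sub_sub_eq_add_sub, add_sub_right_comm]
    rfl
  have hMunit : IsUnit (s • 1 - At) := hAt ▸ isUnit_smul_one_sub_realBlockDiagonal hs1 hs2
  rw [← hzy] at hd
  rw [hsplit, ← hzy, ← hcy]
  refine ⟨isUnit_add_vecMulVec hMunit hMy hd, ?_⟩
  have hsqrt : (√2 : ℂ) * √2 = 2 := by norm_cast; exact Real.mul_self_sqrt zero_le_two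
  rw [hb, hc]
  change ((√2 : ℂ) • ct) ⬝ᵥ (_ *ᵥ ((√2 : ℂ) • bt)) = _
  rw [mulVec_smul, smul_dotProduct, dotProduct_smul, smul_smul, smul_eq_mul, hsqrt,
    dotProduct_inv_add_vecMulVec_mulVec hMunit hMy hd, mul_div_assoc]

/-- Real state-space realization of a conjugate-closed unstructured
barycentric form. The index `(j, a) : Fin m × Fin 2` encodes the `a`-th row/column
of the `j`-th 2×2 block. With the real block-diagonal matrix `Ã` (blocks
`[[Re λ_j, Im λ_j], [−Im λ_j, Re λ_j]]`), real vectors `c̃, b̃, z̃`, and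
`E = I`, `A = Ã − b̃ z̃ᵀ`, `b = √2 b̃`, `c = √2 c̃`, for every admissible `s` the
matrix `sE − A` is invertible and `cᵀ(sE − A)⁻¹b` equals the barycentric form with
conjugate-closed parameters `(λ_j, h_j, w_j)`, `(conj λ_j, conj h_j, conj w_j)`. -/
theorem stmt_15 (m : ℕ) (lam h w : Fin m → ℂ)
    (hlam : Function.Injective lam)
    (hdist : ∀ i j, lam i ≠ starRingEnd ℂ (lam j))
    (At : Matrix (Fin m × Fin 2) (Fin m × Fin 2) ℂ)
    (hAt : At = Matrix.of fun p q =>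
      if p.1 = q.1 then
        (if p.2 = 0 then
          (if q.2 = 0 then ((lam p.1).re : ℂ) else ((lam p.1).im : ℂ))
        else
          (if q.2 = 0 then (-(lam p.1).im : ℂ) else ((lam p.1).re : ℂ)))
      else 0)
    (ct bt zt : Fin m × Fin 2 → ℂ)
    (hct : ct = fun p => if p.2 = 0 then ((h p.1).re : ℂ) else ((h p.1).im : ℂ))
    (hbt : bt = fun p => if p.2 = 0 then ((w p.1).re : ℂ) else (-(w p.1).im : ℂ))
    (hzt : zt = fun p => if p.2 = 0 then (2 : ℂ) else 0)
    (A : Matrix (Fin m × Fin 2) (Fin m × Fin 2) ℂ)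
    (hA : A = At - Matrix.of (fun p q => bt p * zt q))
    (b c : Fin m × Fin 2 → ℂ)
    (hb : b = fun p => (Real.sqrt 2 : ℂ) * bt p)
    (hc : c = fun p => (Real.sqrt 2 : ℂ) * ct p)
    (s : ℂ) (hs1 : ∀ j, s ≠ lam j) (hs2 : ∀ j, s ≠ starRingEnd ℂ (lam j))
    (hd : 1 + ∑ j, (w j / (s - lam j)
          + starRingEnd ℂ (w j) / (s - starRingEnd ℂ (lam j))) ≠ 0) :
    IsUnit (s • (1 : Matrix (Fin m × Fin 2) (Fin m × Fin 2) ℂ) - A)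
    ∧ dotProduct c
        ((s • (1 : Matrix (Fin m × Fin 2) (Fin m × Fin 2) ℂ) - A)⁻¹.mulVec b)
      = (∑ j, (h j * w j / (s - lam j)
          + starRingEnd ℂ (h j) * starRingEnd ℂ (w j) / (s - starRingEnd ℂ (lam j))))
        / (1 + ∑ j, (w j / (s - lam j)
          + starRingEnd ℂ (w j) / (s - starRingEnd ℂ (lam j)))) :=
  stmt_15_general m lam h w At hAt ct bt zt hct hbt hzt A hA b c hb hc s hs1 hs2 hd
end
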